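/- arXiv:1005.5414 — 7 statements merged into one kernel-verified Lean document; each statement's English description precedes it below -/
import Mathlib

section
/- Let f : 𝔘 → ℝ be measurable, and let 𝒞 and 𝓑 be measurable ordered partitions of 𝔘 associated to partitions 𝒞* and 𝓑* of N = {1,…,n}, with 𝒞 ≤_ref 𝓑 (every set of 𝒞 is a union of sets of 𝓑). Then the stratified maximum estimators satisfy W_S^𝒞 ≤_st W_S^𝓑, i.e. P(W_S^𝒞 > t) ≤ P(W_S^𝓑 > t) for all real t. -/
open MeasureTheory ProbabilityTheory

/-- A measurable ordered partition of `𝔘` associated to a partition of `N = {1,…,n}`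
(modelled as `Fin n`).  The partition of `Fin n` is encoded by the fiber map `idx`:
the block `B*` corresponding to the stratum `sets i` is the fiber `{j | idx j = i}`,
so that `P(U ∈ B_i) = |B_i*| / n` with every `|B_i*|` a positive integer. -/
structure StratPart (𝔘 : Type*) [MeasurableSpace 𝔘] (μ : Measure 𝔘) (n : ℕ) where
  b : ℕ
  sets : Fin b → Set 𝔘
  meas : ∀ i, MeasurableSet (sets i)
  disj : Pairwise (Function.onFun Disjoint sets)
  cover : (⋃ i, sets i) = Set.univ
  idx : Fin n → Fin b
  idx_surj : Function.Surjective idx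
  prob : ∀ i, μ (sets i) =
    ((Finset.univ.filter fun j => idx j = i).card : ENNReal) / (n : ENNReal)

/-- `|B_i*|`, the number of sample indices assigned to stratum `i`. -/
def StratPart.blockCard {𝔘 : Type*} [MeasurableSpace 𝔘] {μ : Measure 𝔘} {n : ℕ}
    (B : StratPart 𝔘 μ n) (i : Fin B.b) : ℕ :=
  (Finset.univ.filter fun j => B.idx j = i).card

/-- `C ≤_ref B` : every set of `C` is a union of sets of `B`, with the associated
partitions of `Fin n` refining compatibly. -/
def StratPart.Refines {𝔘 : Type*} [MeasurableSpace 𝔘] {μ : Measure 𝔘} {n : ℕ}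
    (C B : StratPart 𝔘 μ n) : Prop :=
  ∃ ρ : Fin B.b → Fin C.b, (∀ i, B.sets i ⊆ C.sets (ρ i)) ∧ ∀ j, C.idx j = ρ (B.idx j)

/-- `{V_j^B : j ∈ B*, B ∈ 𝓑}` is a stratified sample for the partition `B`:
the `V_j` are independent and `V_j` has the conditional law `P_{U|B}` of the stratum of `j`. -/
def IsStratSample {Ω 𝔘 : Type*} [MeasurableSpace Ω] [MeasurableSpace 𝔘] {μ : Measure 𝔘}
    {n : ℕ} (B : StratPart 𝔘 μ n) (P : Measure Ω) (V : Fin n → Ω → 𝔘) : Prop :=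
  (∀ j, Measurable (V j)) ∧ iIndepFun V P ∧
    ∀ j, Measure.map (V j) P = μ[|B.sets (B.idx j)]

/-- The stratified maximum estimator `W_S^𝓑 = max_{B ∈ 𝓑} max_{j ∈ B*} f(V_j^B)`. -/
noncomputable def WS {Ω 𝔘 : Type*} {n : ℕ} (f : 𝔘 → ℝ) (V : Fin n → Ω → 𝔘) (ω : Ω) : ℝ :=
  ⨆ j, f (V j ω)

/-! By independence, `P(W_S > t) = 1 - ∏ᵢ pᵢ ^ kᵢ`, where `pᵢ = P(f U ≤ t | U ∈ Bᵢ)` and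
`kᵢ = |Bᵢ*|`. Since `P(U ∈ Bᵢ) = kᵢ / n`, the conditional probability of a stratum of `𝒞`
that is the union of strata `Bᵢ` of `𝓑` is the mean of the `pᵢ` weighted by the `kᵢ`, so the
weighted AM-GM inequality bounds the product over the finer partition `𝓑` by the product over
the coarser partition `𝒞`. -/

open Finset
open scoped ENNReal NNReal

theorem ENNReal.prod_pow_le_weighted_mean_pow {ι : Type*} (s : Finset ι) (k : ι → ℕ)
    (x : ι → ℝ≥0∞) (hx : ∀ i, x i ≠ ∞) :
    ∏ i ∈ s, x i ^ k i ≤ ((∑ i ∈ s, k i * x i) / ∑ i ∈ s, k i) ^ ∑ i ∈ s, k i := by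
  set N := ∑ i ∈ s, k i
  rcases eq_or_ne N 0 with hN0 | hN0
  · have hk : ∀ i ∈ s, k i = 0 := sum_eq_zero_iff.mp hN0
    rw [hN0, pow_zero]
    exact (prod_eq_one fun i hi => by rw [hk i hi, pow_zero]).le
  lift x to ι → ℝ≥0 using hx
  have hN' : (N : ℝ≥0) ≠ 0 := by exact_mod_cast hN0
  have amgm := NNReal.geom_mean_le_arith_mean_weighted s (fun i => (k i : ℝ≥0) / N) x
    (by rw [← sum_div, ← Nat.cast_sum, div_self hN'])
  have key : ∏ i ∈ s, x i ^ k i ≤ ((∑ i ∈ s, k i * x i) / N) ^ N := calc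
    ∏ i ∈ s, x i ^ k i = (∏ i ∈ s, x i ^ ((k i / N : ℝ≥0) : ℝ)) ^ N := by
      rw [← prod_pow]
      refine prod_congr rfl fun i _ => ?_
      rw [← NNReal.rpow_natCast (_ ^ _ : ℝ≥0) N, ← NNReal.rpow_mul]
      push_cast
      rw [div_mul_cancel₀ _ (by exact_mod_cast hN0), NNReal.rpow_natCast]
    _ ≤ (∑ i ∈ s, (k i / N : ℝ≥0) * x i) ^ N := pow_le_pow_left₀ bot_le amgm N
    _ = ((∑ i ∈ s, k i * x i) / N) ^ N := by
      simp_rw [sum_div, div_mul_eq_mul_div]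
  have := ENNReal.coe_le_coe.mpr key
  push_cast [ENNReal.coe_div hN'] at this
  exact this

section CondMean
variable {α ι : Type*} [MeasurableSpace α] {μ : Measure α} {s : Finset ι} {B : ι → Set α}
  {k : ι → ℕ} {c : ℝ≥0∞} {t : Set α}

theorem ProbabilityTheory.cond_biUnion_eq_weighted_mean (hB : ∀ i ∈ s, MeasurableSet (B i))
    (hdisj : (s : Set ι).PairwiseDisjoint B) (hc₀ : c ≠ 0) (hc : c ≠ ∞)
    (hμB : ∀ i ∈ s, μ (B i) = k i * c) (ht : MeasurableSet t) :
    μ[t | ⋃ i ∈ s, B i] = (∑ i ∈ s, k i * μ[t | B i]) / ∑ i ∈ s, k i := by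
  have hU : μ (⋃ i ∈ s, B i) = (∑ i ∈ s, k i : ℕ) * c := by
    rw [measure_biUnion_finset hdisj hB, sum_congr rfl hμB, ← sum_mul, Nat.cast_sum]
  have hUt : μ ((⋃ i ∈ s, B i) ∩ t) = (∑ i ∈ s, k i * μ[t | B i]) * c := by
    rw [Set.iUnion₂_inter, measure_biUnion_finset
      (hdisj.mono fun i => Set.inter_subset_left) fun i hi => (hB i hi).inter ht, sum_mul]
    refine sum_congr rfl fun i hi => ?_
    have hBi : μ (B i) ≠ ∞ := hμB i hi ▸ ENNReal.mul_ne_top (ENNReal.natCast_ne_top _) hc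
    rw [← cond_mul_eq_inter' (hB i hi) hBi, hμB i hi]
    ring
  rw [cond_apply (Finset.measurableSet_biUnion s hB), hU, hUt, ← ENNReal.div_eq_inv_mul,
    ENNReal.mul_div_mul_right _ _ hc₀ hc]

theorem ProbabilityTheory.prod_cond_pow_le_cond_biUnion_pow (hB : ∀ i ∈ s, MeasurableSet (B i))
    (hdisj : (s : Set ι).PairwiseDisjoint B) (hc₀ : c ≠ 0) (hc : c ≠ ∞)
    (hμB : ∀ i ∈ s, μ (B i) = k i * c) (ht : MeasurableSet t) :
    ∏ i ∈ s, μ[t | B i] ^ k i ≤ μ[t | ⋃ i ∈ s, B i] ^ ∑ i ∈ s, k i := by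
  rw [cond_biUnion_eq_weighted_mean hB hdisj hc₀ hc hμB ht]
  exact ENNReal.prod_pow_le_weighted_mean_pow s k _ fun i => measure_ne_top _ _

end CondMean

theorem ProbabilityTheory.iIndepFun.measure_lt_ciSup_eq_one_sub_prod {Ω α ι : Type*}
    [MeasurableSpace Ω] [MeasurableSpace α] [Fintype ι] [Nonempty ι]
    {P : Measure Ω} [IsProbabilityMeasure P] {V : ι → Ω → α} (hV : ∀ j, Measurable (V j))
    (hind : iIndepFun V P) {f : α → ℝ} (hf : Measurable f) (t : ℝ) :
    P {ω | t < ⨆ j, f (V j ω)} = 1 - ∏ j, P (V j ⁻¹' {x | f x ≤ t}) := by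
  have hs : MeasurableSet {x | f x ≤ t} := measurableSet_le hf measurable_const
  have hcompl : {ω | t < ⨆ j, f (V j ω)} = (⋂ j, V j ⁻¹' {x | f x ≤ t})ᶜ := by
    ext ω
    simpa using lt_ciSup_iff (Set.finite_range fun j => f (V j ω)).bddAbove
  rw [hcompl, prob_compl_eq_one_sub (.iInter fun j => hV j hs),
    hind.meas_iInter fun j => ⟨_, hs, rfl⟩]

namespace StratPart
variable {𝔘 : Type*} [MeasurableSpace 𝔘] {μ : Measure 𝔘} {n : ℕ}

theorem measure_sets (D : StratPart 𝔘 μ n) (i : Fin D.b) :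
    μ (D.sets i) = D.blockCard i * (n : ℝ≥0∞)⁻¹ := by
  rw [← div_eq_mul_inv]
  exact D.prob i

theorem prod_comp_idx {M : Type*} [CommMonoid M] (D : StratPart 𝔘 μ n) (g : Fin D.b → M) :
    ∏ j, g (D.idx j) = ∏ i, g i ^ D.blockCard i := by
  rw [← prod_fiberwise' univ D.idx g]
  simp [blockCard]

theorem sets_eq_biUnion_of_subset {C B : StratPart 𝔘 μ n} {ρ : Fin B.b → Fin C.b}
    (hsub : ∀ i, B.sets i ⊆ C.sets (ρ i)) (k : Fin C.b) :
    C.sets k = ⋃ i ∈ ({i | ρ i = k} : Finset _), B.sets i := by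
  refine subset_antisymm (fun x hx => ?_) (Set.iUnion₂_subset fun i hi => ?_)
  · obtain ⟨i, hi⟩ := Set.mem_iUnion.mp (B.cover.symm ▸ Set.mem_univ x)
    refine Set.mem_biUnion (mem_filter.mpr ⟨mem_univ i, ?_⟩) hi
    by_contra hne
    exact Set.disjoint_left.mp (C.disj hne) (hsub i hi) hx
  · exact (mem_filter.mp hi).2 ▸ hsub i

theorem blockCard_eq_sum_of_idx_eq {C B : StratPart 𝔘 μ n} {ρ : Fin B.b → Fin C.b}
    (hidx : ∀ j, C.idx j = ρ (B.idx j)) (k : Fin C.b) :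
    C.blockCard k = ∑ i ∈ ({i | ρ i = k} : Finset _), B.blockCard i := by
  simp only [blockCard, hidx]
  rw [card_eq_sum_card_fiberwise (f := B.idx) (t := {i | ρ i = k}) fun j hj => by simpa using hj]
  refine sum_congr rfl fun i hi => ?_
  rw [filter_filter]
  exact congrArg card (filter_congr fun j _ => by grind)

theorem prod_cond_pow_le_of_refines [NeZero n] {C B : StratPart 𝔘 μ n} (href : C.Refines B)
    {t : Set 𝔘} (ht : MeasurableSet t) :
    ∏ i, μ[t | B.sets i] ^ B.blockCard i ≤ ∏ k, μ[t | C.sets k] ^ C.blockCard k := by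
  obtain ⟨ρ, hsub, hidx⟩ := href
  rw [← prod_fiberwise univ ρ]
  refine prod_le_prod' fun k _ => ?_
  rw [sets_eq_biUnion_of_subset hsub k, blockCard_eq_sum_of_idx_eq hidx k]
  exact prod_cond_pow_le_cond_biUnion_pow (fun i _ => B.meas i) (B.disj.set_pairwise _)
    (by simp) (by simp [NeZero.ne n]) (fun i _ => B.measure_sets i) ht

end StratPart

theorem IsStratSample.measure_lt_WS {Ω 𝔘 : Type*} [MeasurableSpace Ω] [MeasurableSpace 𝔘]
    {μ : Measure 𝔘} {P : Measure Ω} [IsProbabilityMeasure P] {n : ℕ} [NeZero n]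
    {D : StratPart 𝔘 μ n} {V : Fin n → Ω → 𝔘} (hV : IsStratSample D P V) {f : 𝔘 → ℝ}
    (hf : Measurable f) (t : ℝ) :
    P {ω | t < WS f V ω} = 1 - ∏ i, μ[{x | f x ≤ t} | D.sets i] ^ D.blockCard i := by
  obtain ⟨hmeas, hind, hlaw⟩ := hV
  simp only [WS]
  rw [hind.measure_lt_ciSup_eq_one_sub_prod hmeas hf t, ← D.prod_comp_idx]
  congr 1
  refine prod_congr rfl fun j _ => ?_
  rw [← hlaw j, Measure.map_apply (hmeas j) (measurableSet_le hf measurable_const)]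

theorem stratified_max_stochastic_order_general
    {Ω 𝔘 : Type*} [MeasurableSpace Ω] [MeasurableSpace 𝔘]
    (μ : Measure 𝔘)
    (P : Measure Ω) [IsProbabilityMeasure P]
    (n : ℕ) [NeZero n] (f : 𝔘 → ℝ) (hf : Measurable f)
    (C B : StratPart 𝔘 μ n) (href : C.Refines B)
    (VB VC : Fin n → Ω → 𝔘)
    (hVB : IsStratSample B P VB) (hVC : IsStratSample C P VC) :
    ∀ t : ℝ, P {ω | t < WS f VC ω} ≤ P {ω | t < WS f VB ω} := by
  intro t
  have hs : MeasurableSet {x | f x ≤ t} := measurableSet_le hf measurable_const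
  rw [hVC.measure_lt_WS hf t, hVB.measure_lt_WS hf t]
  exact tsub_le_tsub_left (C.prod_cond_pow_le_of_refines href hs) 1

/-- Theorem 3.1: if `𝒞 ≤_ref 𝓑` then `W_S^𝒞 ≤_st W_S^𝓑`. -/
theorem stratified_max_stochastic_order
    {Ω 𝔘 : Type*} [MeasurableSpace Ω] [MeasurableSpace 𝔘]
    (μ : Measure 𝔘) [IsProbabilityMeasure μ] [NullSingletonClass μ]
    (P : Measure Ω) [IsProbabilityMeasure P]
    (n : ℕ) [NeZero n] (f : 𝔘 → ℝ) (hf : Measurable f)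
    (C B : StratPart 𝔘 μ n) (href : C.Refines B)
    (VB VC : Fin n → Ω → 𝔘)
    (hVB : IsStratSample B P VB) (hVC : IsStratSample C P VC) :
    ∀ t : ℝ, P {ω | t < WS f VC ω} ≤ P {ω | t < WS f VB ω} :=
  stratified_max_stochastic_order_general μ P n f hf C B href VB VC hVB hVC
end

section
/- Let f : 𝔘 → [0,1] be measurable and let 𝓑 be a measurable ordered partition of 𝔘 associated to a partition 𝓑* of N = {1,…,n}. Then for every t ∈ [0,1], the distribution function of the censored maximum estimator satisfies P(W_CS^𝓑 ≤ t) = ∏_{B ∈ 𝓑} ( ∫_B [ (t ∧ f(u)) + (1 − f(u)) ] dP_{U|B}(u) )^{|B*|}. -/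
open MeasureTheory ProbabilityTheory

/-- A censored stratified sample: the pairs `(V_j, T_j)` are independent across `j`,
`V_j` has the conditional law `P_{U|B}` of the stratum of `j`, `T_j` is uniform on `[0,1]`,
and `V_j` is independent of `T_j` (the law of the pair is the product law). -/
def IsCensoredStratSample {Ω 𝔘 : Type*} [MeasurableSpace Ω] [MeasurableSpace 𝔘]
    {μ : Measure 𝔘} {n : ℕ} (B : StratPart 𝔘 μ n) (P : Measure Ω)
    (V : Fin n → Ω → 𝔘) (T : Fin n → Ω → ℝ) : Prop :=
  (∀ j, Measurable (V j)) ∧ (∀ j, Measurable (T j)) ∧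
    iIndepFun (fun j ω => (V j ω, T j ω)) P ∧
    ∀ j, Measure.map (fun ω => (V j ω, T j ω)) P =
      (μ[|B.sets (B.idx j)]).prod (volume.restrict (Set.Icc (0:ℝ) 1))

/-- The censored maximum estimator `W_CS^𝓑 = max {T_j : j ∈ S^𝓑}`, equal to `0` when
`S^𝓑 = {j : T_j ≤ f(V_j)}` is empty (the empty supremum in `ℝ` is `0`). -/
noncomputable def WCS {Ω 𝔘 : Type*} {n : ℕ} (f : 𝔘 → ℝ) (V : Fin n → Ω → 𝔘)
    (T : Fin n → Ω → ℝ) (ω : Ω) : ℝ :=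
  ⨆ j : {j : Fin n // T j ω ≤ f (V j ω)}, T j.1 ω

open Set

/-!
`W_CS ≤ t` holds exactly when every pair `(V_j, T_j)` lies in the set of pairs `(u, s)` with
`s ≤ f u → s ≤ t`. By independence of the pairs the probability factorises over `j`; by Fubini
each factor is the `P_{U|B}`-average of the Lebesgue measure of the slice
`{s ∈ [0,1] | s ≤ f u → s ≤ t} = [0, t ∧ f u] ∪ (f u, 1]`, which is `(t ∧ f u) + (1 - f u)`.
Grouping the indices `j` by their stratum gives the power `|B*|`.
-/

section Censoring

variable {𝔘 : Type*} (f : 𝔘 → ℝ) (t : ℝ)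

/-- The pairs `(u, s)` that cannot push the censored maximum above `t`. -/
def censoredLeSet : Set (𝔘 × ℝ) := {p | p.2 ≤ f p.1 → p.2 ≤ t}

variable {f t}

lemma setOf_WCS_le {Ω : Type*} {n : ℕ} (V : Fin n → Ω → 𝔘) (T : Fin n → Ω → ℝ) (ht : 0 ≤ t) :
    {ω | WCS f V T ω ≤ t} = ⋂ j, (fun ω => (V j ω, T j ω)) ⁻¹' censoredLeSet f t := by
  ext ω
  simp only [mem_ofPred_eq, mem_iInter, mem_preimage, censoredLeSet, WCS]
  constructor
  · intro h j hj
    exact (le_ciSup (f := fun j : {j // T j ω ≤ f (V j ω)} => T j.1 ω)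
      (finite_range _).bddAbove ⟨j, hj⟩).trans h
  · exact fun h => Real.iSup_le (fun j => h j.1 j.2) ht

variable [MeasurableSpace 𝔘]

lemma measurableSet_censoredLeSet (hf : Measurable f) : MeasurableSet (censoredLeSet f t) := by
  have : censoredLeSet f t = {p : 𝔘 × ℝ | p.2 ≤ f p.1}ᶜ ∪ {p | p.2 ≤ t} := by
    ext p; simp [censoredLeSet, imp_iff_not_or]
  rw [this]
  exact (measurableSet_le measurable_snd (hf.comp measurable_fst)).compl.union
    (measurableSet_le measurable_snd measurable_const)

lemma volume_restrict_Icc_setOf_le_imp_le {a : ℝ} (ht : 0 ≤ t) (ha₀ : 0 ≤ a) (ha₁ : a ≤ 1) :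
    volume.restrict (Icc (0 : ℝ) 1) {s | s ≤ a → s ≤ t} = ENNReal.ofReal (min t a + (1 - a)) := by
  have hsplit : {s | s ≤ a → s ≤ t} ∩ Icc 0 1 = Icc 0 (min t a) ∪ Ioc a 1 := by
    ext s
    simp only [mem_inter_iff, mem_ofPred_eq, mem_Icc, mem_union, mem_Ioc, le_min_iff]
    grind
  have hdisj : Disjoint (Icc 0 (min t a)) (Ioc a 1) :=
    (Iic_disjoint_Ioc (min_le_right t a)).mono_left Icc_subset_Iic_self
  rw [Measure.restrict_apply' measurableSet_Icc, hsplit, measure_union hdisj measurableSet_Ioc,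
    Real.volume_Icc, Real.volume_Ioc, sub_zero, ← ENNReal.ofReal_add (le_min ht ha₀) (by linarith)]

lemma measureReal_prod_uniform_censoredLeSet {ν : Measure 𝔘} [IsFiniteMeasure ν]
    (hf : Measurable f) (hf01 : ∀ u, f u ∈ Icc (0 : ℝ) 1) (ht : 0 ≤ t) :
    (ν.prod (volume.restrict (Icc (0 : ℝ) 1))).real (censoredLeSet f t) =
      ∫ u, (min t (f u) + (1 - f u)) ∂ν := by
  have hg₀ : ∀ u, 0 ≤ min t (f u) + (1 - f u) := fun u => by
    have := (hf01 u).2; have := le_min ht (hf01 u).1; linarith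
  have hg : Integrable (fun u => min t (f u) + (1 - f u)) ν := by
    refine (integrable_const (1 : ℝ)).mono'
      ((measurable_const.min hf).add (measurable_const.sub hf)).aestronglyMeasurable
      (ae_of_all _ fun u => ?_)
    rw [Real.norm_of_nonneg (hg₀ u)]
    have := min_le_right t (f u); linarith
  calc (ν.prod (volume.restrict (Icc (0 : ℝ) 1))).real (censoredLeSet f t)
      = (∫⁻ u, ENNReal.ofReal (min t (f u) + (1 - f u)) ∂ν).toReal := by
        rw [measureReal_def, Measure.prod_apply (measurableSet_censoredLeSet hf)]
        exact congrArg _ (lintegral_congr fun u =>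
          volume_restrict_Icc_setOf_le_imp_le ht (hf01 u).1 (hf01 u).2)
    _ = ∫ u, (min t (f u) + (1 - f u)) ∂ν := by
        rw [← ofReal_integral_eq_lintegral_ofReal hg (ae_of_all _ hg₀),
          ENNReal.toReal_ofReal (integral_nonneg hg₀)]

end Censoring

lemma StratPart.prod_idx_eq_prod_pow_blockCard {𝔘 M : Type*} [MeasurableSpace 𝔘] [CommMonoid M]
    {μ : Measure 𝔘} {n : ℕ} (B : StratPart 𝔘 μ n) (g : Fin B.b → M) :
    ∏ j, g (B.idx j) = ∏ i, g i ^ B.blockCard i := by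
  rw [← Finset.prod_fiberwise' Finset.univ B.idx g]
  simp [StratPart.blockCard]

namespace IsCensoredStratSample

variable {Ω 𝔘 : Type*} [MeasurableSpace Ω] [MeasurableSpace 𝔘] {μ : Measure 𝔘} {n : ℕ}
  {B : StratPart 𝔘 μ n} {P : Measure Ω} {V : Fin n → Ω → 𝔘} {T : Fin n → Ω → ℝ}

lemma measureReal_iInter_preimage (hVT : IsCensoredStratSample B P V T) {C : Set (𝔘 × ℝ)}
    (hC : MeasurableSet C) :
    P.real (⋂ j, (fun ω => (V j ω, T j ω)) ⁻¹' C) =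
      ∏ j, P.real ((fun ω => (V j ω, T j ω)) ⁻¹' C) := by
  obtain ⟨-, -, hindep, -⟩ := hVT
  rw [measureReal_def, hindep.meas_iInter fun _ => ⟨C, hC, rfl⟩, ENNReal.toReal_prod]
  rfl

lemma measureReal_preimage_censoredLeSet (hVT : IsCensoredStratSample B P V T) {f : 𝔘 → ℝ}
    {t : ℝ} (hf : Measurable f) (hf01 : ∀ u, f u ∈ Icc (0 : ℝ) 1) (ht : 0 ≤ t) (j : Fin n) :
    P.real ((fun ω => (V j ω, T j ω)) ⁻¹' censoredLeSet f t) =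
      ∫ u, (min t (f u) + (1 - f u)) ∂μ[|B.sets (B.idx j)] := by
  obtain ⟨hV, hT, -, hlaw⟩ := hVT
  rw [← map_measureReal_apply ((hV j).prodMk (hT j)) (measurableSet_censoredLeSet hf), hlaw j,
    measureReal_prod_uniform_censoredLeSet hf hf01 ht]

end IsCensoredStratSample

theorem censored_max_distribution_function_general
    {Ω 𝔘 : Type*} [MeasurableSpace Ω] [MeasurableSpace 𝔘]
    (μ : Measure 𝔘)
    (P : Measure Ω)
    (n : ℕ) (f : 𝔘 → ℝ) (hf : Measurable f)
    (hf01 : ∀ u, f u ∈ Set.Icc (0:ℝ) 1)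
    (B : StratPart 𝔘 μ n)
    (V : Fin n → Ω → 𝔘) (T : Fin n → Ω → ℝ)
    (hVT : IsCensoredStratSample B P V T) :
    ∀ t ∈ Set.Icc (0:ℝ) 1,
      (P {ω | WCS f V T ω ≤ t}).toReal =
        ∏ i : Fin B.b,
          (∫ u, (min t (f u) + (1 - f u)) ∂(μ[|B.sets i])) ^ (B.blockCard i) := by
  rintro t ⟨ht, -⟩
  rw [← measureReal_def, setOf_WCS_le V T ht,
    hVT.measureReal_iInter_preimage (measurableSet_censoredLeSet hf)]
  simp_rw [hVT.measureReal_preimage_censoredLeSet hf hf01 ht]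
  exact B.prod_idx_eq_prod_pow_blockCard fun i => ∫ u, (min t (f u) + (1 - f u)) ∂μ[|B.sets i]

/-- the distribution function of the censored maximum estimator is
`P(W_CS^𝓑 ≤ t) = ∏_{B ∈ 𝓑} ( ∫_B [ (t ∧ f(u)) + (1 − f(u)) ] dP_{U|B}(u) )^{|B*|}`. -/
theorem censored_max_distribution_function
    {Ω 𝔘 : Type*} [MeasurableSpace Ω] [MeasurableSpace 𝔘]
    (μ : Measure 𝔘) [IsProbabilityMeasure μ] [NullSingletonClass μ]
    (P : Measure Ω) [IsProbabilityMeasure P]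
    (n : ℕ) [NeZero n] (f : 𝔘 → ℝ) (hf : Measurable f)
    (hf01 : ∀ u, f u ∈ Set.Icc (0:ℝ) 1)
    (B : StratPart 𝔘 μ n)
    (V : Fin n → Ω → 𝔘) (T : Fin n → Ω → ℝ)
    (hVT : IsCensoredStratSample B P V T) :
    ∀ t ∈ Set.Icc (0:ℝ) 1,
      (P {ω | WCS f V T ω ≤ t}).toReal =
        ∏ i : Fin B.b,
          (∫ u, (min t (f u) + (1 - f u)) ∂(μ[|B.sets i])) ^ (B.blockCard i) :=
  censored_max_distribution_function_general μ P n f hf hf01 B V T hVT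
end

section
/- Let f : 𝔘 → [0,1] be measurable and let 𝓑 be a measurable ordered partition of 𝔘 associated to a partition 𝓑* of N = {1,…,n}. Then the censored maximum estimator is stochastically dominated by the uncensored one: W_CS^𝓑 ≤_st W_S^𝓑, i.e. P(W_CS^𝓑 > t) ≤ P(W_S^𝓑 > t) for all real t. -/
open MeasureTheory ProbabilityTheory

/- The stochastic order holds because the domination is pointwise: each retained `T_j` is at most
`f(V_j)`, and the junk value `0` of an empty censored maximum is below `WS` since `f ≥ 0`. -/
theorem WCS_le_WS {Ω 𝔘 : Type*} {n : ℕ} {f : 𝔘 → ℝ} (hf0 : ∀ u, 0 ≤ f u)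
    (V : Fin n → Ω → 𝔘) (T : Fin n → Ω → ℝ) (ω : Ω) : WCS f V T ω ≤ WS f V ω :=
  Real.iSup_le
    (fun j => j.2.trans (le_ciSup (f := fun j => f (V j ω)) (Set.finite_range _).bddAbove j.1))
    (Real.iSup_nonneg fun j => hf0 (V j ω))

theorem censored_max_le_st_max_general
    {Ω 𝔘 : Type*} [MeasurableSpace Ω]
    (P : Measure Ω)
    (n : ℕ) (f : 𝔘 → ℝ)
    (hf01 : ∀ u, f u ∈ Set.Icc (0:ℝ) 1)
    (V : Fin n → Ω → 𝔘) (T : Fin n → Ω → ℝ) :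
    ∀ t : ℝ, P {ω | t < WCS f V T ω} ≤ P {ω | t < WS f V ω} :=
  fun _ => measure_mono fun ω hω =>
    lt_of_lt_of_le hω (WCS_le_WS (fun u => (hf01 u).1) V T ω)

/-- the censored maximum estimator is stochastically dominated by the
uncensored one, `W_CS^𝓑 ≤_st W_S^𝓑`. -/
theorem censored_max_le_st_max
    {Ω 𝔘 : Type*} [MeasurableSpace Ω] [MeasurableSpace 𝔘]
    (μ : Measure 𝔘) [IsProbabilityMeasure μ] [NullSingletonClass μ]
    (P : Measure Ω) [IsProbabilityMeasure P]
    (n : ℕ) [NeZero n] (f : 𝔘 → ℝ) (hf : Measurable f)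
    (hf01 : ∀ u, f u ∈ Set.Icc (0:ℝ) 1)
    (B : StratPart 𝔘 μ n)
    (V : Fin n → Ω → 𝔘) (T : Fin n → Ω → ℝ)
    (hVT : IsCensoredStratSample B P V T) :
    ∀ t : ℝ, P {ω | t < WCS f V T ω} ≤ P {ω | t < WS f V ω} :=
  censored_max_le_st_max_general P n f hf01 V T
end

section
/- Let f : 𝔘 → ℝ be measurable with E[f(U)^2] < ∞, and let 𝒞 and 𝓑 be measurable ordered partitions of 𝔘 associated to partitions 𝒞* and 𝓑* of N = {1,…,n}, with 𝒞 ≤_ref 𝓑 (every set of 𝒞 is a union of sets of 𝓑). Then the stratified noisy integral estimators satisfy Var[W_IE^𝓑] ≤ Var[W_IE^𝒞]. -/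
open MeasureTheory ProbabilityTheory

/-- A noisy stratified sample: the pairs `(V_j, ε_j)` are independent across `j`,
`V_j` has the conditional law `P_{U|B}` of the stratum of `j`, the noise `ε_j` has law `ν`,
and `V_j` is independent of `ε_j` (the law of the pair is the product law). -/
def IsNoisyStratSample {Ω 𝔘 : Type*} [MeasurableSpace Ω] [MeasurableSpace 𝔘]
    {μ : Measure 𝔘} {n : ℕ} (B : StratPart 𝔘 μ n) (P : Measure Ω) (ν : Measure ℝ)
    (V : Fin n → Ω → 𝔘) (ε : Fin n → Ω → ℝ) : Prop :=
  (∀ j, Measurable (V j)) ∧ (∀ j, Measurable (ε j)) ∧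
    iIndepFun (fun j ω => (V j ω, ε j ω)) P ∧
    ∀ j, Measure.map (fun ω => (V j ω, ε j ω)) P = (μ[|B.sets (B.idx j)]).prod ν

/-- The noisy stratified integral estimator
`W_IE^𝓑 = (1/n) Σ_{B ∈ 𝓑} Σ_{j ∈ B*} (f(V_j^B) + ε_j)`. -/
noncomputable def WIE {Ω 𝔘 : Type*} {n : ℕ} (f : 𝔘 → ℝ) (V : Fin n → Ω → 𝔘)
    (ε : Fin n → Ω → ℝ) (ω : Ω) : ℝ :=
  (n : ℝ)⁻¹ * ∑ j, (f (V j ω) + ε j ω)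

open Finset

section CondVariance

variable {𝔘 : Type*} [MeasurableSpace 𝔘] {μ : Measure 𝔘} {f : 𝔘 → ℝ}

lemma integral_cond (g : 𝔘 → ℝ) (s : Set 𝔘) :
    ∫ x, g x ∂μ[|s] = (μ.real s)⁻¹ * ∫ x in s, g x ∂μ := by
  rw [ProbabilityTheory.cond, integral_smul_measure, ENNReal.toReal_inv, smul_eq_mul,
    measureReal_def]

lemma MeasureTheory.MemLp.cond (hf : MemLp f 2 μ) (s : Set 𝔘) : MemLp f 2 μ[|s] := by
  rcases eq_or_ne (μ s) 0 with hs | hs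
  · simp [cond_eq_zero_of_meas_eq_zero hs]
  · exact (hf.restrict s).smul_measure (ENNReal.inv_ne_top.mpr hs)

variable [IsFiniteMeasure μ]

lemma measureReal_mul_variance_cond (hf : MemLp f 2 μ) (s : Set 𝔘) :
    μ.real s * Var[f; μ[|s]] = ∫ x in s, f x ^ 2 ∂μ - (∫ x in s, f x ∂μ) ^ 2 / μ.real s := by
  rcases eq_or_ne (μ s) 0 with hs | hs
  · simp [Measure.restrict_eq_zero.mpr hs, measureReal_def, hs]
  have := cond_isProbabilityMeasure (μ := μ) hs
  have hpos : 0 < μ.real s := ENNReal.toReal_pos hs (measure_ne_top μ s)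
  rw [variance_eq_sub (hf.cond s)]
  simp only [Pi.pow_apply, integral_cond]
  field_simp

lemma sum_measureReal_mul_variance_cond_le {ι : Type*} (S : Finset ι) {t : ι → Set 𝔘}
    (ht : ∀ i ∈ S, MeasurableSet (t i)) (hdisj : Set.PairwiseDisjoint ↑S t)
    (ht0 : ∀ i ∈ S, μ (t i) ≠ 0) (hf : MemLp f 2 μ) :
    ∑ i ∈ S, μ.real (t i) * Var[f; μ[|t i]]
      ≤ μ.real (⋃ i ∈ S, t i) * Var[f; μ[|⋃ i ∈ S, t i]] := by
  have hpos : ∀ i ∈ S, 0 < μ.real (t i) :=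
    fun i hi => ENNReal.toReal_pos (ht0 i hi) (measure_ne_top μ _)
  have hunion : ∀ g : 𝔘 → ℝ, Integrable g μ →
      ∫ x in ⋃ i ∈ S, t i, g x ∂μ = ∑ i ∈ S, ∫ x in t i, g x ∂μ :=
    fun g hg => integral_biUnion_finset S ht hdisj fun i _ => hg.integrableOn
  simp only [measureReal_mul_variance_cond hf, sum_sub_distrib]
  rw [hunion _ (hf.integrable one_le_two), hunion _ hf.integrable_sq,
    measureReal_biUnion_finset (μ := μ) hdisj ht]
  have := sq_sum_div_le_sum_sq_div S (fun i => ∫ x in t i, f x ∂μ) hpos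
  linarith

end CondVariance

namespace StratPart

variable {𝔘 : Type*} [MeasurableSpace 𝔘] {μ : Measure 𝔘} {n : ℕ}

lemma blockCard_pos (D : StratPart 𝔘 μ n) (i : Fin D.b) : 0 < D.blockCard i := by
  obtain ⟨j, rfl⟩ := D.idx_surj i
  exact card_pos.mpr ⟨j, by simp⟩

lemma measure_ne_zero (D : StratPart 𝔘 μ n) (i : Fin D.b) : μ (D.sets i) ≠ 0 := by
  rw [D.prob i, Ne, ENNReal.div_eq_zero_iff, not_or]
  exact ⟨Nat.cast_ne_zero.mpr (D.blockCard_pos i).ne', ENNReal.natCast_ne_top n⟩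

lemma natCast_mul_measureReal (D : StratPart 𝔘 μ n) (i : Fin D.b) :
    n * μ.real (D.sets i) = D.blockCard i := by
  rcases Nat.eq_zero_or_pos n with rfl | hn
  · simp [blockCard]
  rw [measureReal_def, D.prob i, ENNReal.toReal_div, ENNReal.toReal_natCast,
    ENNReal.toReal_natCast, mul_div_cancel₀ _ (by positivity)]
  rfl

lemma sum_comp_idx (D : StratPart 𝔘 μ n) (φ : Fin D.b → ℝ) :
    ∑ j, φ (D.idx j) = n * ∑ i, μ.real (D.sets i) * φ i := by
  rw [← sum_fiberwise univ D.idx, mul_sum]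
  refine sum_congr rfl fun i _ => ?_
  rw [← mul_assoc, natCast_mul_measureReal, blockCard, ← nsmul_eq_mul, ← sum_const]
  exact sum_congr rfl fun j hj => by rw [(mem_filter.mp hj).2]

lemma sets_eq_biUnion {C B : StratPart 𝔘 μ n} {ρ : Fin B.b → Fin C.b}
    (hsub : ∀ i, B.sets i ⊆ C.sets (ρ i)) (c : Fin C.b) :
    C.sets c = ⋃ i ∈ univ.filter (ρ · = c), B.sets i := by
  ext x
  simp only [Set.mem_iUnion, mem_filter, mem_univ, true_and, exists_prop]
  refine ⟨fun hx => ?_, fun ⟨i, hc, hxi⟩ => hc ▸ hsub i hxi⟩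
  obtain ⟨i, hi⟩ := Set.mem_iUnion.mp (B.cover ▸ Set.mem_univ x)
  refine ⟨i, ?_, hi⟩
  by_contra hne
  exact Set.disjoint_left.mp (C.disj hne) (hsub i hi) hx

variable [IsFiniteMeasure μ]

lemma Refines.sum_measureReal_mul_variance_cond_le {C B : StratPart 𝔘 μ n} (h : C.Refines B)
    {f : 𝔘 → ℝ} (hf : MemLp f 2 μ) :
    ∑ i, μ.real (B.sets i) * Var[f; μ[|B.sets i]]
      ≤ ∑ c, μ.real (C.sets c) * Var[f; μ[|C.sets c]] := by
  obtain ⟨ρ, hsub, -⟩ := h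
  rw [← sum_fiberwise univ ρ]
  refine sum_le_sum fun c _ => ?_
  rw [sets_eq_biUnion hsub c]
  exact _root_.sum_measureReal_mul_variance_cond_le _ (fun i _ => B.meas i)
    (fun i _ j _ hij => B.disj hij) (fun i _ => B.measure_ne_zero i) hf

lemma Refines.sum_variance_cond_le {C B : StratPart 𝔘 μ n} (h : C.Refines B)
    {f : 𝔘 → ℝ} (hf : MemLp f 2 μ) :
    ∑ j, Var[f; μ[|B.sets (B.idx j)]] ≤ ∑ j, Var[f; μ[|C.sets (C.idx j)]] := by
  rw [B.sum_comp_idx fun i => Var[f; μ[|B.sets i]],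
    C.sum_comp_idx fun c => Var[f; μ[|C.sets c]]]
  gcongr
  exact h.sum_measureReal_mul_variance_cond_le hf

end StratPart

lemma variance_sum_comp_of_iIndepFun {Ω β ι : Type*} [MeasurableSpace Ω] [MeasurableSpace β]
    [Fintype ι] {P : Measure Ω} {X : ι → Ω → β} (hX : ∀ i, Measurable (X i))
    (hind : iIndepFun X P) {g : β → ℝ} (hg : Measurable g) (hg2 : ∀ i, MemLp g 2 (P.map (X i))) :
    Var[fun ω => ∑ i, g (X i ω); P] = ∑ i, Var[g; P.map (X i)] := by
  have hsum : (fun ω => ∑ i, g (X i ω)) = ∑ i, g ∘ X i := by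
    funext ω
    simp only [Finset.sum_apply, Function.comp_apply]
  rw [hsum, IndepFun.variance_sum
    (fun i _ => (memLp_map_measure_iff (hg2 i).1 (hX i).aemeasurable).mp (hg2 i))
    (fun i _ j _ hij => (hind.indepFun hij).comp hg hg)]
  exact sum_congr rfl fun i _ => (variance_map hg.aemeasurable (hX i).aemeasurable).symm

lemma IsNoisyStratSample.variance_WIE {Ω 𝔘 : Type*} [MeasurableSpace Ω] [MeasurableSpace 𝔘]
    {μ : Measure 𝔘} [IsFiniteMeasure μ] {n : ℕ} {D : StratPart 𝔘 μ n} {P : Measure Ω}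
    {ν : Measure ℝ} [IsProbabilityMeasure ν] {V : Fin n → Ω → 𝔘} {ε : Fin n → Ω → ℝ}
    (h : IsNoisyStratSample D P ν V ε) {f : 𝔘 → ℝ} (hf : Measurable f) (hf2 : MemLp f 2 μ)
    (hν : MemLp id 2 ν) :
    Var[WIE f V ε; P] = (n : ℝ)⁻¹ ^ 2 * ∑ j, (Var[f; μ[|D.sets (D.idx j)]] + Var[id; ν]) := by
  obtain ⟨hV, hε, hind, hlaw⟩ := h
  have := fun j => cond_isProbabilityMeasure (D.measure_ne_zero (D.idx j))
  have hsum := variance_sum_comp_of_iIndepFun (fun j => (hV j).prodMk (hε j)) hind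
    (g := fun p => f p.1 + id p.2) (by fun_prop)
    fun j => hlaw j ▸ ((hf2.cond _).comp_fst ν).add (hν.comp_snd _)
  simp only [hlaw, variance_add_prod (hf2.cond _) hν] at hsum
  rw [← hsum, ← variance_smul]
  rfl

theorem noisy_integral_variance_le_general
    {Ω 𝔘 : Type*} [MeasurableSpace Ω] [MeasurableSpace 𝔘]
    (μ : Measure 𝔘) [IsProbabilityMeasure μ]
    (P : Measure Ω)
    (n : ℕ) (f : 𝔘 → ℝ) (hf : Measurable f)
    (hf2 : MemLp f 2 μ)
    (ν : Measure ℝ) [IsProbabilityMeasure ν]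
    (hν_var : Integrable (fun x => x ^ 2) ν)
    (C B : StratPart 𝔘 μ n) (href : C.Refines B)
    (VB VC : Fin n → Ω → 𝔘) (εB εC : Fin n → Ω → ℝ)
    (hB : IsNoisyStratSample B P ν VB εB)
    (hC : IsNoisyStratSample C P ν VC εC) :
    variance (WIE f VB εB) P ≤ variance (WIE f VC εC) P := by
  have hν : MemLp id 2 ν := (memLp_two_iff_integrable_sq aestronglyMeasurable_id).mpr hν_var
  rw [hB.variance_WIE hf hf2 hν, hC.variance_WIE hf hf2 hν, sum_add_distrib, sum_add_distrib]
  gcongr ?_ * (?_ + _)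
  exact href.sum_variance_cond_le hf2

/-- Theorem 4.1: if `𝒞 ≤_ref 𝓑` then `Var[W_IE^𝓑] ≤ Var[W_IE^𝒞]`,
where the observations `f(V_j) + ε_j` carry i.i.d. mean-zero finite-variance noise. -/
theorem noisy_integral_variance_le
    {Ω 𝔘 : Type*} [MeasurableSpace Ω] [MeasurableSpace 𝔘]
    (μ : Measure 𝔘) [IsProbabilityMeasure μ] [NullSingletonClass μ]
    (P : Measure Ω) [IsProbabilityMeasure P]
    (n : ℕ) [NeZero n] (f : 𝔘 → ℝ) (hf : Measurable f)
    (hf2 : MemLp f 2 μ)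
    (ν : Measure ℝ) [IsProbabilityMeasure ν]
    (hν_mean : ∫ x, x ∂ν = 0) (hν_var : Integrable (fun x => x ^ 2) ν)
    (C B : StratPart 𝔘 μ n) (href : C.Refines B)
    (VB VC : Fin n → Ω → 𝔘) (εB εC : Fin n → Ω → ℝ)
    (hB : IsNoisyStratSample B P ν VB εB)
    (hC : IsNoisyStratSample C P ν VC εC) :
    variance (WIE f VB εB) P ≤ variance (WIE f VC εC) P :=
  noisy_integral_variance_le_general μ P n f hf hf2 ν hν_var C B href VB VC εB εC hB hC
end

section
/- Let 𝓐 = (A_1,…,A_n) be a measurable partition of 𝔘 with P(U ∈ A_i) = 1/n for each i, let A_1 be split into measurable subsets A_{1a} and A_{1b} with P(U ∈ A_{1a}) = P(U ∈ A_{1b}) = 1/(2n), and define f(u) = 1 for u ∈ A_{1a}, f(u) = −1 for u ∈ A_{1b}, and f(u) = 0 otherwise. Let W_I^𝓐 = (1/n) Σ_{i=1}^n f(V_i), where V_1,…,V_n are independent with V_i distributed as the conditional law of U given U ∈ A_i, and let W_I^𝓓 = (1/n) Σ_{j=1}^n f(V_j'), where V_1',…,V_n' are i.i.d. with the law of U.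 Then: (i) Var[W_I^𝓐] = Var[W_I^𝓓] = 1/n²; (ii) E|W_I^𝓐| = 1/n; (iii) E|W_I^𝓓| < 1/n. In particular, W_I^𝓐 is not dominated by W_I^𝓓 in the convex order, even though both are unbiased estimators of E[f(U)] = 0 with equal variances. -/
/-!
Each `Vᵢ` lies in `Aᵢ` almost surely, so only `V₀` meets the support `A1a ∪ A1b = A₀` of `f`,
and `f(V₀) = ±1` with probability `1/2` each; hence `W^𝓐 = f(V₀)/n` has variance `1/n²` and `E|W^𝓐| = 1/n`.
The `f(V'ᵢ)` are independent and centred with `E f(V'ᵢ)² = E|f(V'ᵢ)| = 1/n`, so `W^𝓓` also has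
variance `1/n²`. But `E|∑ f(V'ᵢ)| < ∑ E|f(V'ᵢ)| = 1`: the triangle inequality is strict on the
event `{f(V'₀) = 1, f(V'₁) = -1}`, which has probability `1/(4n²) > 0` by independence.
-/

open MeasureTheory ProbabilityTheory

section SignedIndicator

variable {α : Type*} {s t : Set α}

noncomputable def signedIndicator (s t : Set α) (x : α) : ℝ := s.indicator 1 x - t.indicator 1 x

lemma signedIndicator_of_mem_left (hst : Disjoint s t) {x : α} (hx : x ∈ s) :
    signedIndicator s t x = 1 := by
  simp [signedIndicator, hx, hst.notMem_of_mem_left hx]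

lemma signedIndicator_of_mem_right (hst : Disjoint s t) {x : α} (hx : x ∈ t) :
    signedIndicator s t x = -1 := by
  simp [signedIndicator, hx, hst.notMem_of_mem_right hx]

lemma signedIndicator_of_notMem {x : α} (hs : x ∉ s) (ht : x ∉ t) :
    signedIndicator s t x = 0 := by
  simp [signedIndicator, hs, ht]

lemma support_signedIndicator_subset : Function.support (signedIndicator s t) ⊆ s ∪ t :=
  fun _ hx => by_contra fun h =>
    hx (signedIndicator_of_notMem (fun hs => h (.inl hs)) fun ht => h (.inr ht))

lemma abs_signedIndicator (hst : Disjoint s t) (x : α) :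
    |signedIndicator s t x| = (s ∪ t).indicator 1 x := by
  by_cases hs : x ∈ s
  · simp [signedIndicator_of_mem_left hst hs, hs]
  by_cases ht : x ∈ t
  · simp [signedIndicator_of_mem_right hst ht, ht]
  · simp [signedIndicator_of_notMem hs ht, hs, ht]

lemma abs_signedIndicator_le_one (hst : Disjoint s t) (x : α) : |signedIndicator s t x| ≤ 1 := by
  rw [abs_signedIndicator hst]
  by_cases hx : x ∈ s ∪ t <;> simp [hx]

lemma sq_signedIndicator (hst : Disjoint s t) (x : α) :
    signedIndicator s t x ^ 2 = |signedIndicator s t x| := by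
  rw [← sq_abs, abs_signedIndicator hst]
  by_cases hx : x ∈ s ∪ t <;> simp [hx]

variable [MeasurableSpace α]

lemma measurable_signedIndicator (hs : MeasurableSet s) (ht : MeasurableSet t) :
    Measurable (signedIndicator s t) :=
  (measurable_const.indicator hs).sub (measurable_const.indicator ht)

lemma memLp_signedIndicator_comp {β : Type*} [MeasurableSpace β] (ν : Measure β)
    [IsFiniteMeasure ν] (hst : Disjoint s t) (hs : MeasurableSet s) (ht : MeasurableSet t)
    {X : β → α} (hX : Measurable X) (p : ENNReal) :
    MemLp (fun ω => signedIndicator s t (X ω)) p ν :=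
  .of_bound ((measurable_signedIndicator hs ht).comp hX).aestronglyMeasurable 1
    (.of_forall fun ω => abs_signedIndicator_le_one hst (X ω))

variable (ν : Measure α) [IsFiniteMeasure ν]

lemma integral_signedIndicator (hs : MeasurableSet s) (ht : MeasurableSet t) :
    ∫ x, signedIndicator s t x ∂ν = ν.real s - ν.real t := by
  simp only [signedIndicator]
  rw [integral_sub ((integrable_const 1).indicator hs)
    ((integrable_const 1).indicator ht), integral_indicator_one hs, integral_indicator_one ht]

lemma integral_abs_signedIndicator (hst : Disjoint s t) (hs : MeasurableSet s)
    (ht : MeasurableSet t) :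
    ∫ x, |signedIndicator s t x| ∂ν = ν.real s + ν.real t := by
  simp_rw [abs_signedIndicator hst]
  rw [integral_indicator_one (hs.union ht), measureReal_union hst ht]

lemma variance_signedIndicator [IsProbabilityMeasure ν] (hst : Disjoint s t)
    (hs : MeasurableSet s) (ht : MeasurableSet t) :
    Var[signedIndicator s t; ν] = ν.real s + ν.real t - (ν.real s - ν.real t) ^ 2 := by
  rw [variance_eq_sub, integral_signedIndicator ν hs ht]
  · simp only [Pi.pow_apply, sq_signedIndicator hst, integral_abs_signedIndicator ν hst hs ht]
  · exact memLp_signedIndicator_comp ν hst hs ht measurable_id 2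

lemma measureReal_cond_union_left_eq_half (hst : Disjoint s t) (hs : MeasurableSet s)
    (ht : MeasurableSet t) (hμ : ν s = ν t) (h0 : ν s ≠ 0) : (ν[|s ∪ t]).real s = 1 / 2 := by
  have hfin : ν s ≠ ⊤ := measure_ne_top ν s
  rw [measureReal_def, cond_apply (hs.union ht), Set.union_inter_cancel_left, measure_union hst ht,
    ← hμ, ENNReal.toReal_mul, ENNReal.toReal_inv, ENNReal.toReal_add hfin hfin]
  have : (ν s).toReal ≠ 0 := ENNReal.toReal_ne_zero.2 ⟨h0, hfin⟩
  field_simp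
  norm_num

lemma variance_signedIndicator_cond_union (hst : Disjoint s t) (hs : MeasurableSet s)
    (ht : MeasurableSet t) (hμ : ν s = ν t) (h0 : ν s ≠ 0) :
    Var[signedIndicator s t; ν[|s ∪ t]] = 1 := by
  have := cond_isProbabilityMeasure (μ := ν) (s := s ∪ t)
    (measure_union_null_iff.not.2 fun h => h0 h.1)
  rw [variance_signedIndicator _ hst hs ht, measureReal_cond_union_left_eq_half ν hst hs ht hμ h0,
    Set.union_comm, measureReal_cond_union_left_eq_half ν hst.symm ht hs hμ.symm (hμ ▸ h0)]
  norm_num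

lemma integral_abs_signedIndicator_cond_union (hst : Disjoint s t) (hs : MeasurableSet s)
    (ht : MeasurableSet t) (hμ : ν s = ν t) (h0 : ν s ≠ 0) :
    ∫ x, |signedIndicator s t x| ∂ν[|s ∪ t] = 1 := by
  rw [integral_abs_signedIndicator _ hst hs ht,
    measureReal_cond_union_left_eq_half ν hst hs ht hμ h0, Set.union_comm,
    measureReal_cond_union_left_eq_half ν hst.symm ht hs hμ.symm (hμ ▸ h0)]
  norm_num

end SignedIndicator

lemma abs_sum_lt_sum_abs_of_pos_of_neg {ι : Type*} {s : Finset ι} {y : ι → ℝ} {i j : ι}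
    (hi : i ∈ s) (hj : j ∈ s) (hyi : 0 < y i) (hyj : y j < 0) :
    |∑ k ∈ s, y k| < ∑ k ∈ s, |y k| := by
  rw [abs_lt, ← Finset.sum_neg_distrib]
  constructor
  · exact Finset.sum_lt_sum (fun k _ => neg_abs_le (y k)) ⟨i, hi, by rw [abs_of_pos hyi]; linarith⟩
  · exact Finset.sum_lt_sum (fun k _ => le_abs_self (y k)) ⟨j, hj, by rw [abs_of_neg hyj]; linarith⟩

section Estimators

variable {Ω α ι : Type*} [MeasurableSpace Ω] [MeasurableSpace α] {P : Measure Ω}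

lemma integral_abs_sum_lt_sum_integral_abs [Fintype ι] {Y : ι → Ω → ℝ}
    (hY : ∀ k, Integrable (Y k) P) {i j : ι}
    (hij : P ({ω | 0 < Y i ω} ∩ {ω | Y j ω < 0}) ≠ 0) :
    ∫ ω, |∑ k, Y k ω| ∂P < ∑ k, ∫ ω, |Y k ω| ∂P := by
  have hsum_abs : Integrable (fun ω => ∑ k, |Y k ω|) P :=
    integrable_finsetSum _ fun k _ => (hY k).abs
  rw [← integral_finsetSum _ fun k _ => (hY k).abs, ← sub_pos,
    ← integral_sub hsum_abs (integrable_finsetSum _ fun k _ => hY k).abs,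
    integral_pos_iff_support_of_nonneg (fun ω => sub_nonneg.2 (Finset.abs_sum_le_sum_abs _ _))
      (hsum_abs.sub (integrable_finsetSum _ fun k _ => hY k).abs)]
  refine (pos_iff_ne_zero.2 hij).trans_le (measure_mono fun ω ⟨hi, hj⟩ => ?_)
  exact (sub_pos.2 <|
    abs_sum_lt_sum_abs_of_pos_of_neg (Finset.mem_univ i) (Finset.mem_univ j) hi hj).ne'

lemma sum_ae_eq_of_support_subset [Fintype ι] {μ : Measure α} {V : ι → Ω → α}
    (hV : ∀ i, Measurable (V i)) {A : ι → Set α} (hA : ∀ i, MeasurableSet (A i))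
    (hAdisj : Pairwise (Function.onFun Disjoint A)) (hVlaw : ∀ i, P.map (V i) = μ[|A i])
    {g : α → ℝ} {i₀ : ι} (hg : Function.support g ⊆ A i₀) :
    (fun ω => ∑ i, g (V i ω)) =ᵐ[P] fun ω => g (V i₀ ω) := by
  have hmem : ∀ᵐ ω ∂P, ∀ i, V i ω ∈ A i := ae_all_iff.2 fun i =>
    ae_of_ae_map (hV i).aemeasurable (hVlaw i ▸ ae_cond_mem (hA i))
  filter_upwards [hmem] with ω hω
  refine Finset.sum_eq_single i₀ (fun i _ hi => ?_) (by simp)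
  exact Function.notMem_support.1 fun h => (hAdisj hi).notMem_of_mem_left (hω i) (hg h)

lemma variance_sum_comp_eq_card_mul [Fintype ι] [IsProbabilityMeasure P] {μ : Measure α}
    {V : ι → Ω → α} (hV : ∀ i, Measurable (V i)) (hVindep : Pairwise fun i j => V i ⟂ᵢ[P] V j)
    (hVlaw : ∀ i, P.map (V i) = μ) {g : α → ℝ} (hg : Measurable g) (hgL2 : MemLp g 2 μ) :
    Var[fun ω => ∑ i, g (V i ω); P] = Fintype.card ι * Var[g; μ] := by
  have hvar : ∀ i, Var[fun ω => g (V i ω); P] = Var[g; μ] := fun i => by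
    rw [← hVlaw i, variance_map hg.aemeasurable (hV i).aemeasurable, Function.comp_def]
  have hsum : (fun ω => ∑ i, g (V i ω)) = ∑ i, fun ω => g (V i ω) := by
    ext ω; simp
  rw [hsum, IndepFun.variance_sum (X := fun i ω => g (V i ω))
    (fun i _ => ((hVlaw i).symm ▸ hgL2).comp_of_map (hV i).aemeasurable)
    fun i _ j _ hij => (hVindep hij).comp hg hg]
  simp [hvar]

variable {μ : Measure α} [IsFiniteMeasure μ] {s t : Set α}

lemma variance_sum_signedIndicator_of_stratified [Fintype ι] {V : ι → Ω → α}
    (hV : ∀ i, Measurable (V i)) {A : ι → Set α} (hA : ∀ i, MeasurableSet (A i))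
    (hAdisj : Pairwise (Function.onFun Disjoint A)) (hVlaw : ∀ i, P.map (V i) = μ[|A i])
    (hst : Disjoint s t) (hs : MeasurableSet s) (ht : MeasurableSet t) {i₀ : ι}
    (hA₀ : s ∪ t = A i₀) (hμ : μ s = μ t) (h0 : μ s ≠ 0) :
    Var[fun ω => ∑ i, signedIndicator s t (V i ω); P] = 1 := by
  rw [variance_congr (sum_ae_eq_of_support_subset hV hA hAdisj hVlaw
      (hA₀ ▸ support_signedIndicator_subset)), ← Function.comp_def (signedIndicator s t),
    ← variance_map (measurable_signedIndicator hs ht).aemeasurable (hV i₀).aemeasurable,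
    hVlaw, ← hA₀, variance_signedIndicator_cond_union μ hst hs ht hμ h0]

lemma integral_abs_sum_signedIndicator_of_stratified [Fintype ι] {V : ι → Ω → α}
    (hV : ∀ i, Measurable (V i)) {A : ι → Set α} (hA : ∀ i, MeasurableSet (A i))
    (hAdisj : Pairwise (Function.onFun Disjoint A)) (hVlaw : ∀ i, P.map (V i) = μ[|A i])
    (hst : Disjoint s t) (hs : MeasurableSet s) (ht : MeasurableSet t) {i₀ : ι}
    (hA₀ : s ∪ t = A i₀) (hμ : μ s = μ t) (h0 : μ s ≠ 0) :
    ∫ ω, |∑ i, signedIndicator s t (V i ω)| ∂P = 1 := by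
  rw [integral_congr_ae ((sum_ae_eq_of_support_subset hV hA hAdisj hVlaw
      (hA₀ ▸ support_signedIndicator_subset)).mono fun ω hω => congrArg abs hω),
    ← integral_map (hV i₀).aemeasurable
      (measurable_signedIndicator hs ht).abs.aestronglyMeasurable,
    hVlaw, ← hA₀, integral_abs_signedIndicator_cond_union μ hst hs ht hμ h0]

lemma integral_abs_sum_signedIndicator_lt_of_indep [Fintype ι] [IsFiniteMeasure P]
    {V : ι → Ω → α} (hV : ∀ i, Measurable (V i)) (hVlaw : ∀ i, P.map (V i) = μ) {i j : ι}
    (hVij : V i ⟂ᵢ[P] V j) (hst : Disjoint s t) (hs : MeasurableSet s) (ht : MeasurableSet t)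
    (hs0 : μ s ≠ 0) (ht0 : μ t ≠ 0) :
    ∫ ω, |∑ k, signedIndicator s t (V k ω)| ∂P < Fintype.card ι * (μ.real s + μ.real t) := by
  have hpos : P ({ω | 0 < signedIndicator s t (V i ω)} ∩
      {ω | signedIndicator s t (V j ω) < 0}) ≠ 0 := by
    have hind : P (V i ⁻¹' s ∩ V j ⁻¹' t) = μ s * μ t := by
      rw [hVij.measure_inter_preimage_eq_mul _ _ hs ht,
        ← Measure.map_apply (hV i) hs, ← Measure.map_apply (hV j) ht, hVlaw, hVlaw]
    refine fun h0 => mul_ne_zero hs0 ht0 (hind ▸ measure_mono_null ?_ h0)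
    exact Set.inter_subset_inter (fun ω h => by simp [signedIndicator_of_mem_left hst h])
      fun ω h => by simp [signedIndicator_of_mem_right hst h]
  have hint : ∀ k, ∫ ω, |signedIndicator s t (V k ω)| ∂P = μ.real s + μ.real t := fun k => by
    rw [← integral_map (hV k).aemeasurable
      (measurable_signedIndicator hs ht).abs.aestronglyMeasurable,
      hVlaw, integral_abs_signedIndicator μ hst hs ht]
  calc ∫ ω, |∑ k, signedIndicator s t (V k ω)| ∂P
      < ∑ k, ∫ ω, |signedIndicator s t (V k ω)| ∂P :=
        integral_abs_sum_lt_sum_integral_abs (fun k => memLp_one_iff_integrable.1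
          (memLp_signedIndicator_comp P hst hs ht (hV k) 1)) hpos
    _ = Fintype.card ι * (μ.real s + μ.real t) := by simp [hint, mul_add]

end Estimators

/-- Example 4.2: for the function `f = 1` on `A_{1a}`, `= −1` on `A_{1b}`
and `= 0` elsewhere, the fully stratified estimator `W_I^𝓐` and the unstratified estimator
`W_I^𝓓` satisfy `Var[W_I^𝓐] = Var[W_I^𝓓] = 1/n²`, `E|W_I^𝓐| = 1/n` and `E|W_I^𝓓| < 1/n`;
in particular `W_I^𝓐` is not dominated by `W_I^𝓓` in the convex order. -/
theorem counterexample_convex_order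
    {Ω 𝔘 : Type*} [MeasurableSpace Ω] [MeasurableSpace 𝔘]
    (μ : Measure 𝔘) [IsProbabilityMeasure μ]
    (P : Measure Ω) [IsProbabilityMeasure P]
    (n : ℕ) (hn : 2 ≤ n)
    -- the partition 𝓐 = (A_1,…,A_n) with P(U ∈ A_i) = 1/n
    (A : Fin n → Set 𝔘) (hAmeas : ∀ i, MeasurableSet (A i))
    (hAdisj : Pairwise (Function.onFun Disjoint A))
    -- the splitting of A_1 into A_{1a} and A_{1b} of measure 1/(2n) each
    (A1a A1b : Set 𝔘) (hmA1a : MeasurableSet A1a) (hmA1b : MeasurableSet A1b)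
    (hsplit_disj : Disjoint A1a A1b) (hsplit_union : A1a ∪ A1b = A ⟨0, by omega⟩)
    (hpA1a : μ A1a = ((2 * n : ℕ) : ENNReal)⁻¹) (hpA1b : μ A1b = ((2 * n : ℕ) : ENNReal)⁻¹)
    -- the function f
    (f : 𝔘 → ℝ)
    (hfdef : ∀ u, f u = A1a.indicator (fun _ => (1 : ℝ)) u - A1b.indicator (fun _ => (1 : ℝ)) u)
    -- the stratified sample V and the i.i.d. sample V'
    (V V' : Fin n → Ω → 𝔘)
    (hVmeas : ∀ i, Measurable (V i))
    (hVlaw : ∀ i, Measure.map (V i) P = μ[|A i])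
    (hV'meas : ∀ i, Measurable (V' i)) (hV'indep : iIndepFun V' P)
    (hV'law : ∀ i, Measure.map (V' i) P = μ) :
    variance (fun ω => (n : ℝ)⁻¹ * ∑ i, f (V i ω)) P = ((n : ℝ) ^ 2)⁻¹ ∧
    variance (fun ω => (n : ℝ)⁻¹ * ∑ i, f (V' i ω)) P = ((n : ℝ) ^ 2)⁻¹ ∧
    (∫ ω, |(n : ℝ)⁻¹ * ∑ i, f (V i ω)| ∂P) = (n : ℝ)⁻¹ ∧
    (∫ ω, |(n : ℝ)⁻¹ * ∑ i, f (V' i ω)| ∂P) < (n : ℝ)⁻¹ := by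
  obtain rfl : f = signedIndicator A1a A1b := funext hfdef
  have hμ : μ A1a = μ A1b := hpA1a.trans hpA1b.symm
  have hμ0 : μ A1a ≠ 0 := hpA1a ▸ ENNReal.inv_ne_zero.2 (ENNReal.natCast_ne_top _)
  have hμreal : μ.real A1a = (2 * n : ℝ)⁻¹ ∧ μ.real A1b = (2 * n : ℝ)⁻¹ := by
    simp [measureReal_def, hpA1a, hpA1b]
  have habs_mul : ∀ x : ℝ, |(n : ℝ)⁻¹ * x| = (n : ℝ)⁻¹ * |x| := fun x => by
    rw [abs_mul, abs_inv, Nat.abs_cast]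
  have hn0 : (n : ℝ) ≠ 0 := by positivity
  refine ⟨?_, ?_, ?_, ?_⟩
  · rw [variance_const_mul, variance_sum_signedIndicator_of_stratified hVmeas hAmeas hAdisj hVlaw
      hsplit_disj hmA1a hmA1b hsplit_union hμ hμ0, mul_one, inv_pow]
  · rw [variance_const_mul, variance_sum_comp_eq_card_mul hV'meas
      (fun i j hij => hV'indep.indepFun hij) hV'law
      (measurable_signedIndicator hmA1a hmA1b)
      (memLp_signedIndicator_comp μ hsplit_disj hmA1a hmA1b measurable_id 2),
      variance_signedIndicator μ hsplit_disj hmA1a hmA1b, hμreal.1, hμreal.2, Fintype.card_fin]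
    field_simp
    ring
  · simp_rw [habs_mul]
    rw [integral_const_mul, integral_abs_sum_signedIndicator_of_stratified hVmeas hAmeas hAdisj
      hVlaw hsplit_disj hmA1a hmA1b hsplit_union hμ hμ0, mul_one]
  · have hlt := integral_abs_sum_signedIndicator_lt_of_indep hV'meas hV'law
      (hV'indep.indepFun (i := ⟨0, by omega⟩) (j := ⟨1, by omega⟩) (by simp [Fin.ext_iff]))
      hsplit_disj hmA1a hmA1b hμ0 (hμ ▸ hμ0)
    rw [hμreal.1, hμreal.2, Fintype.card_fin] at hlt
    simp_rw [habs_mul]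
    rw [integral_const_mul]
    calc _ < (n : ℝ)⁻¹ * (n * ((2 * n : ℝ)⁻¹ + (2 * n : ℝ)⁻¹)) := by gcongr
      _ = (n : ℝ)⁻¹ := by field_simp; ring
end

section
/- Let ξ and η be integrable random variables with ξ ≤_st η, let ξ_1, ξ_2, … and η_1, η_2, … be independent copies of ξ and η respectively (all mutually independent), and let K be an integer-valued random variable with 0 ≤ K ≤ m for some integer m, independent of all the ξ_j and η_j, such that E[K] = k is an integer. Then Σ_{j=1}^{k} ξ_j + Σ_{j=k+1}^{m} η_j ≤_cx Σ_{j=1}^{K} ξ_j + Σ_{j=K+1}^{m} η_j. -/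
open MeasureTheory ProbabilityTheory

/-- Index-dependent codomain used to express joint independence of the integer-valued
variable `K` (index `none`) and the real-valued variables `ξ_j` (indices `some (inl j)`)
and `η_j` (indices `some (inr j)`). -/
def mixCodomain : Option (ℕ ⊕ ℕ) → Type
  | none => ℕ
  | some _ => ℝ

instance : ∀ i, MeasurableSpace (mixCodomain i)
  | none => inferInstanceAs (MeasurableSpace ℕ)
  | some _ => inferInstanceAs (MeasurableSpace ℝ)

/-- The combined family `(K, (ξ_j)_j, (η_j)_j)`. -/
def mixFam {Ω : Type*} (ξ η : ℕ → Ω → ℝ) (K : Ω → ℕ) : ∀ i, Ω → mixCodomain i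
  | none => K
  | some (.inl j) => ξ j
  | some (.inr j) => η j

/-!
Let `S n = ξ_0 + ⋯ + ξ_{n-1} + η_n + ⋯ + η_{m-1}` (`mixedSum`). Since `K` is independent of every
`S n`, `E φ(S_K) = ∑ₙ P(K = n) E φ(S n)`, and since `E K = k`, discrete Jensen reduces the claim to
the convexity of `n ↦ E φ(S n)` on `{0, …, m}`. Writing `S n`, `S (n + 1)`, `S (n + 2)` as
`C + η + η'`, `C + ξ + η'`, `C + ξ + ξ'` with `C, ξ, ξ', η, η'` independent, this convexity is the
exchange inequality `2 E φ(C + ξ + η') ≤ E φ(C + ξ + ξ') + E φ(C + η + η')`. It holds because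
`w ↦ E φ(w + η) - E φ(w + ξ)` is nondecreasing (`φ` is convex) and `C + ξ ≤st C + η`.

All these expectations are finite when `φ` is Lipschitz. A general convex `φ` is the increasing
limit of Lipschitz convex functions (maxima of finitely many supporting lines), and monotone
convergence carries the inequality over.
-/

open Set Filter Topology
open scoped NNReal

namespace ConvexOn

variable {φ : ℝ → ℝ}

theorem monotone_sub_comp_add (hφ : ConvexOn ℝ univ φ) {a b : ℝ} (hab : a ≤ b) :
    Monotone fun y => φ (b + y) - φ (a + y) := by
  intro y₁ y₂ hy
  obtain rfl | hab := hab.eq_or_lt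
  · simp
  have h₁ : slope φ (a + y₁) (b + y₁) ≤ slope φ (a + y₁) (b + y₂) :=
    hφ.slope_mono trivial ⟨trivial, by simp; linarith⟩ ⟨trivial, by simp; linarith⟩ (by linarith)
  have h₂ : slope φ (b + y₂) (a + y₁) ≤ slope φ (b + y₂) (a + y₂) :=
    hφ.slope_mono trivial ⟨trivial, by simp; linarith⟩ ⟨trivial, by simp; linarith⟩ (by linarith)
  rw [slope_comm φ (a + y₁) (b + y₂)] at h₁
  have h₃ := h₁.trans h₂
  simp only [slope_def_field] at h₃
  rw [show b + y₁ - (a + y₁) = b - a by ring, show a + y₂ - (b + y₂) = -(b - a) by ring,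
    div_neg, ← neg_div, div_le_div_iff_of_pos_right (by linarith)] at h₃
  simp only
  linarith

theorem exists_lipschitzWith_tendsto (hφ : ConvexOn ℝ univ φ) :
    ∃ (Ψ : ℕ → ℝ → ℝ) (L : ℕ → ℝ≥0), (∀ N, ConvexOn ℝ univ (Ψ N) ∧ LipschitzWith (L N) (Ψ N)) ∧
      ∀ x, Monotone (Ψ · x) ∧ Tendsto (Ψ · x) atTop (𝓝 (φ x)) := by
  obtain ⟨l, c, hle, hsup⟩ := hφ.real_univ_sSup_of_nat_affine_eq
    (continuousOn_univ.1 (hφ.continuousOn isOpen_univ)).lowerSemicontinuous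
  set a : ℕ → ℝ → ℝ := fun i => ⇑(l i) + Function.const ℝ (c i)
  have ha_cvx (i : ℕ) : ConvexOn ℝ univ (a i) :=
    ((l i).toLinearMap.convexOn convex_univ).add_const (c i)
  have ha_lip (i : ℕ) : LipschitzWith ‖l i‖₊ (a i) := by
    have := (l i).lipschitz.add (LipschitzWith.const (c i))
    rwa [add_zero] at this
  refine ⟨partialSups a, partialSups fun i => ‖l i‖₊, fun N => ?_, fun x => ?_⟩
  · induction N with
    | zero => exact ⟨ha_cvx 0, ha_lip 0⟩
    | succ N ih =>
      simp only [← Order.succ_eq_add_one, partialSups_succ]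
      exact ⟨ih.1.sup (ha_cvx _), ih.2.max (ha_lip _)⟩
  · have hbdd : BddAbove (range fun i => a i x) := ⟨φ x, by rintro _ ⟨i, rfl⟩; exact hle i x⟩
    simp_rw [Pi.partialSups_apply]
    refine ⟨partialSups_monotone _, ?_⟩
    have := tendsto_atTop_ciSup (partialSups_monotone _) (bddAbove_range_partialSups.2 hbdd)
    rwa [ciSup_partialSups_eq hbdd, ← iSup_apply, hsup] at this

end ConvexOn

section StochasticOrder

variable {μ ν : Measure ℝ} [IsProbabilityMeasure μ] [IsProbabilityMeasure ν]

theorem measure_Ici_le_of_forall_measure_Ioi_le (h : ∀ t, μ (Ioi t) ≤ ν (Ioi t)) (a : ℝ) :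
    μ (Ici a) ≤ ν (Ici a) := by
  have hIci : Ici a = ⋂ r > (0 : ℝ), Ioi (a - r) := by
    ext x
    simp only [mem_Ici, mem_iInter, mem_Ioi]
    exact ⟨fun hx r _ => by linarith, fun hx => le_of_forall_pos_lt_add fun r hr => by
      linarith [hx r hr]⟩
  have tendsto (ρ : Measure ℝ) [IsFiniteMeasure ρ] :
      Tendsto (fun r => ρ (Ioi (a - r))) (𝓝[>] 0) (𝓝 (ρ (Ici a))) := by
    rw [hIci]
    exact tendsto_measure_biInter_gt (fun r _ => measurableSet_Ioi.nullMeasurableSet)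
      (fun r s _ hrs => Ioi_subset_Ioi (by linarith)) ⟨1, one_pos, measure_ne_top _ _⟩
  exact le_of_tendsto_of_tendsto' (tendsto μ) (tendsto ν) fun r => h _

theorem measure_le_of_isUpperSet (h : ∀ t, μ (Ioi t) ≤ ν (Ioi t)) {s : Set ℝ}
    (hs : IsUpperSet s) : μ s ≤ ν s := by
  by_cases hb : BddBelow s
  · rcases s.eq_empty_or_nonempty with rfl | hne
    · simp
    by_cases ha : sInf s ∈ s
    · have : s = Ici (sInf s) :=
        subset_antisymm (fun x hx => csInf_le hb hx) (hs.Ici_subset ha)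
      rw [this]
      exact measure_Ici_le_of_forall_measure_Ioi_le h _
    · have : s = Ioi (sInf s) := by
        refine subset_antisymm (fun x hx => (csInf_le hb hx).lt_of_ne ?_) fun x hx => ?_
        · rintro rfl; exact ha hx
        · obtain ⟨y, hy, hyx⟩ := exists_lt_of_csInf_lt hne hx
          exact hs hyx.le hy
      rw [this]
      exact h _
  · have : s = univ := eq_univ_of_forall fun x => by
      obtain ⟨y, hy, hyx⟩ := not_bddBelow_iff.1 hb x
      exact hs hyx.le hy
    simp [this]

theorem measure_le_of_isLowerSet (h : ∀ t, μ (Ioi t) ≤ ν (Ioi t)) {s : Set ℝ}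
    (hs : IsLowerSet s) (hsm : MeasurableSet s) : ν s ≤ μ s := by
  have := measure_le_of_isUpperSet h hs.compl
  rwa [prob_compl_eq_one_sub hsm, prob_compl_eq_one_sub hsm,
    ENNReal.sub_le_sub_iff_left prob_le_one ENNReal.one_ne_top] at this

theorem lintegral_ofReal_le_of_forall_measure_lt_le {g : ℝ → ℝ} (hg : Measurable g)
    (h : ∀ t, μ {x | t < g x} ≤ ν {x | t < g x}) :
    ∫⁻ x, ENNReal.ofReal (g x) ∂μ ≤ ∫⁻ x, ENNReal.ofReal (g x) ∂ν := by
  have hpos (t : ℝ) : μ {x | t < max (g x) 0} ≤ ν {x | t < max (g x) 0} := by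
    rcases lt_or_ge t 0 with ht | ht
    · simp [ht]
    · simpa [lt_max_iff, not_lt.2 ht] using h t
  have hofReal (x : ℝ) : ENNReal.ofReal (g x) = ENNReal.ofReal (max (g x) 0) := by
    simp [ENNReal.ofReal_max]
  simp_rw [hofReal]
  have hmax : Measurable fun x => max (g x) 0 := hg.max measurable_const
  have hnn (ρ : Measure ℝ) : 0 ≤ᵐ[ρ] fun x => max (g x) 0 := ae_of_all _ fun _ => le_max_right _ _
  rw [lintegral_eq_lintegral_meas_lt μ (hnn μ) hmax.aemeasurable,
    lintegral_eq_lintegral_meas_lt ν (hnn ν) hmax.aemeasurable]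
  exact lintegral_mono hpos

theorem integral_le_integral_of_monotone (h : ∀ t, μ (Ioi t) ≤ ν (Ioi t)) {g : ℝ → ℝ}
    (hg : Monotone g) (hgμ : Integrable g μ) (hgν : Integrable g ν) :
    ∫ x, g x ∂μ ≤ ∫ x, g x ∂ν := by
  have hpos := lintegral_ofReal_le_of_forall_measure_lt_le hg.measurable fun t =>
    measure_le_of_isUpperSet h fun x y hxy hx => lt_of_lt_of_le hx (hg hxy)
  have hneg := lintegral_ofReal_le_of_forall_measure_lt_le (μ := ν) (ν := μ) (g := fun x => -g x)
    hg.measurable.neg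
    fun t => measure_le_of_isLowerSet h (fun x y hxy hx => lt_of_lt_of_le hx (neg_le_neg (hg hxy)))
      (measurableSet_lt measurable_const hg.measurable.neg)
  rw [integral_eq_lintegral_pos_part_sub_lintegral_neg_part hgμ,
    integral_eq_lintegral_pos_part_sub_lintegral_neg_part hgν]
  have := ENNReal.toReal_mono hgν.lintegral_lt_top.ne hpos
  have := ENNReal.toReal_mono (hgμ.fun_neg : Integrable (fun x => -g x) μ).lintegral_lt_top.ne hneg
  linarith

theorem conv_Ioi_le_conv_Ioi (h : ∀ t, μ (Ioi t) ≤ ν (Ioi t)) (γ : Measure ℝ) [SFinite γ] (t : ℝ) :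
    (γ ∗ μ) (Ioi t) ≤ (γ ∗ ν) (Ioi t) := by
  have hm : MeasurableSet ((fun p : ℝ × ℝ => p.1 + p.2) ⁻¹' Ioi t) :=
    measurable_add measurableSet_Ioi
  rw [Measure.conv, Measure.conv, Measure.map_apply measurable_add measurableSet_Ioi,
    Measure.map_apply measurable_add measurableSet_Ioi, Measure.prod_apply hm,
    Measure.prod_apply hm]
  refine lintegral_mono fun x => ?_
  have : Prod.mk x ⁻¹' ((fun p : ℝ × ℝ => p.1 + p.2) ⁻¹' Ioi t) = Ioi (t - x) := by
    ext y; simp [sub_lt_iff_lt_add']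
  rw [this]
  exact h _

end StochasticOrder


theorem LipschitzWith.integrable_comp {α E F : Type*} [MeasurableSpace α] {μ : Measure α}
    [IsFiniteMeasure μ] [NormedAddCommGroup E] [NormedAddCommGroup F] {g : E → F} {L : ℝ≥0}
    (hg : LipschitzWith L g) {f : α → E} (hf : Integrable f μ) :
    Integrable (fun x => g (f x)) μ := by
  refine ((integrable_const ‖g 0‖).add (hf.norm.const_mul L)).mono'
    (hg.continuous.comp_aestronglyMeasurable hf.1) (ae_of_all _ fun x => ?_)
  calc ‖g (f x)‖ ≤ ‖g 0‖ + ‖g (f x) - g 0‖ := norm_le_insert' _ _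
    _ ≤ ‖g 0‖ + L * ‖f x‖ := by gcongr; simpa using hg.norm_sub_le (f x) 0

section Exchange

variable {γ μ ν : Measure ℝ} [IsProbabilityMeasure γ] [IsProbabilityMeasure μ]
  [IsProbabilityMeasure ν] {Ψ : ℝ → ℝ} {L : ℝ≥0}

theorem integrable_comp_add_prod {ρ σ : Measure ℝ} [IsFiniteMeasure ρ] [IsFiniteMeasure σ]
    (hL : LipschitzWith L Ψ) (hρ : Integrable id ρ) (hσ : Integrable id σ) :
    Integrable (fun p : ℝ × ℝ => Ψ (p.1 + p.2)) (ρ.prod σ) :=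
  hL.integrable_comp ((hρ.comp_fst σ).add (hσ.comp_snd ρ))

theorem integrable_id_conv {ρ σ : Measure ℝ} [IsFiniteMeasure ρ] [IsFiniteMeasure σ]
    (hρ : Integrable id ρ) (hσ : Integrable id σ) : Integrable id (ρ ∗ σ) :=
  (integrable_map_measure aestronglyMeasurable_id (by fun_prop)).2
    (integrable_comp_add_prod LipschitzWith.id hρ hσ)

theorem monotone_integral_comp_add_sub (hμν : ∀ t, μ (Ioi t) ≤ ν (Ioi t))
    (hμ : Integrable id μ) (hν : Integrable id ν) (hΨ : ConvexOn ℝ univ Ψ)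
    (hL : LipschitzWith L Ψ) :
    Monotone fun w => ∫ y, Ψ (w + y) ∂ν - ∫ y, Ψ (w + y) ∂μ := by
  have hint {ρ : Measure ℝ} [IsFiniteMeasure ρ] (hρ : Integrable id ρ) (w : ℝ) :
      Integrable (fun y => Ψ (w + y)) ρ :=
    hL.integrable_comp ((integrable_const w).add hρ)
  intro w₁ w₂ hw
  have := integral_le_integral_of_monotone hμν (hΨ.monotone_sub_comp_add hw)
    ((hint hμ w₂).sub (hint hμ w₁)) ((hint hν w₂).sub (hint hν w₁))
  rw [integral_sub (hint hμ w₂) (hint hμ w₁), integral_sub (hint hν w₂) (hint hν w₁)] at this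
  linarith

theorem two_mul_integral_conv_le (hμν : ∀ t, μ (Ioi t) ≤ ν (Ioi t)) (hγ : Integrable id γ)
    (hμ : Integrable id μ) (hν : Integrable id ν) (hΨ : ConvexOn ℝ univ Ψ)
    (hL : LipschitzWith L Ψ) :
    2 * ∫ x, Ψ x ∂(γ ∗ μ ∗ ν) ≤ ∫ x, Ψ x ∂(γ ∗ μ ∗ μ) + ∫ x, Ψ x ∂(γ ∗ ν ∗ ν) := by
  have hI {ρ σ : Measure ℝ} [IsProbabilityMeasure ρ] [IsProbabilityMeasure σ]
      (hρ : Integrable id ρ) (hσ : Integrable id σ) :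
      ∫ x, Ψ x ∂(γ ∗ ρ ∗ σ) = ∫ w, ∫ y, Ψ (w + y) ∂σ ∂(γ ∗ ρ) := by
    rw [← Measure.conv_assoc, integral_conv (f := Ψ)
      (hL.integrable_comp (integrable_id_conv (integrable_id_conv hγ hρ) hσ))]
  have hint {ρ σ : Measure ℝ} [IsProbabilityMeasure ρ] [IsProbabilityMeasure σ]
      (hρ : Integrable id ρ) (hσ : Integrable id σ) :
      Integrable (fun w => ∫ y, Ψ (w + y) ∂σ) (γ ∗ ρ) :=
    (integrable_comp_add_prod hL (integrable_id_conv hγ hρ) hσ).integral_prod_left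
  have key := integral_le_integral_of_monotone (conv_Ioi_le_conv_Ioi hμν γ)
    (monotone_integral_comp_add_sub hμν hμ hν hΨ hL) ((hint hμ hν).sub (hint hμ hμ))
    ((hint hν hν).sub (hint hν hμ))
  rw [integral_sub (hint hμ hν) (hint hμ hμ), integral_sub (hint hν hν) (hint hν hμ),
    ← hI hμ hν, ← hI hμ hμ, ← hI hν hν, ← hI hν hμ, Measure.conv_comm ν μ] at key
  linarith

end Exchange

section Jensen

open Finset

theorem add_mul_sub_le_of_slope_le {f : ℕ → ℝ} {m k : ℕ} {d : ℝ}
    (hup : ∀ i, k ≤ i → i < m → d ≤ f (i + 1) - f i) (hdown : ∀ i < k, f (i + 1) - f i ≤ d)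
    {n : ℕ} (hn : n ≤ m) : f k + d * (n - k) ≤ f n := by
  rcases le_total k n with hkn | hnk
  · induction n, hkn using Nat.le_induction with
    | base => simp
    | succ n hkn ih =>
      have := hup n hkn (by omega)
      push_cast
      linarith [ih (by omega)]
  · clear hn
    induction hnk using Nat.decreasingInduction with
    | self => simp
    | of_succ n hnk ih =>
      have := hdown n hnk
      push_cast at ih
      linarith

theorem le_sum_mul_of_midconvex {f p : ℕ → ℝ} {m k : ℕ} (hk : k ≤ m)
    (hf : ∀ n, n + 2 ≤ m → 2 * f (n + 1) ≤ f n + f (n + 2)) (hp : ∀ n, 0 ≤ p n)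
    (hp₁ : ∑ n ∈ range (m + 1), p n = 1) (hpk : ∑ n ∈ range (m + 1), n * p n = k) :
    f k ≤ ∑ n ∈ range (m + 1), p n * f n := by
  have hslope : ∀ i j, i ≤ j → j < m → f (i + 1) - f i ≤ f (j + 1) - f j := by
    intro i j hij
    induction j, hij using Nat.le_induction with
    | base => intro _; rfl
    | succ j hij ih => intro hj; linarith [ih (by omega), hf j (by omega)]
  -- the slope of `f` between `i₀` and `i₀ + 1`, where `i₀ ≤ k ≤ i₀ + 1`, supports `f` at `k`
  set i₀ := min k (m - 1)
  have hsupp (n : ℕ) (hn : n ≤ m) : f k + (f (i₀ + 1) - f i₀) * (n - k) ≤ f n :=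
    add_mul_sub_le_of_slope_le (fun i hki him => hslope _ _ (by omega) him)
      (fun i hik => hslope _ _ (by omega) (by omega)) hn
  have hsum : ∑ n ∈ range (m + 1), p n * (f k + (f (i₀ + 1) - f i₀) * (n - k)) = f k := by
    set d := f (i₀ + 1) - f i₀
    rw [sum_congr rfl fun n _ => show p n * (f k + d * (n - k)) =
      f k * p n + d * (n * p n) - d * k * p n by ring, sum_sub_distrib, sum_add_distrib,
      ← mul_sum, ← mul_sum, ← mul_sum, hp₁, hpk]
    ring
  calc f k = ∑ n ∈ range (m + 1), p n * (f k + (f (i₀ + 1) - f i₀) * (n - k)) := hsum.symm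
    _ ≤ ∑ n ∈ range (m + 1), p n * f n :=
      sum_le_sum fun n hn => mul_le_mul_of_nonneg_left (hsupp n (by simp at hn; omega)) (hp n)

end Jensen

namespace ProbabilityTheory

section Independence

variable {Ω ι : Type*} {mΩ : MeasurableSpace Ω} {μ : Measure Ω} {β : ι → Type*}
  {mβ : ∀ i, MeasurableSpace (β i)} {f : ∀ i, Ω → β i}

theorem measurable_biSup_comap {S : Set ι} {i : ι} (hi : i ∈ S) :
    Measurable[⨆ i ∈ S, (mβ i).comap (f i)] (f i) :=
  (comap_measurable (f i)).mono (le_iSup₂ (f := fun i _ => (mβ i).comap (f i)) i hi) le_rfl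

theorem iIndepFun.indepFun_of_measurable_biSup (hf : iIndepFun f μ) (hfm : ∀ i, Measurable (f i))
    {S T : Set ι} (hST : Disjoint S T) {γ δ : Type*} [MeasurableSpace γ] [MeasurableSpace δ]
    {F : Ω → γ} {G : Ω → δ} (hF : Measurable[⨆ i ∈ S, (mβ i).comap (f i)] F)
    (hG : Measurable[⨆ i ∈ T, (mβ i).comap (f i)] G) : IndepFun F G μ := by
  rw [IndepFun_iff_Indep]
  exact indep_of_indep_of_le_right (indep_of_indep_of_le_left
    (indep_iSup_of_disjoint (fun i => (hfm i).comap_le) ((iIndepFun_iff_iIndep _ _ _).1 hf) hST)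
    hF.comap_le) hG.comap_le

end Independence

section RandomIndex

variable {Ω : Type*} {mΩ : MeasurableSpace Ω} {P : Measure Ω} {X : ℕ → Ω → ℝ} {K : Ω → ℕ}
  {s : Finset ℕ}

theorem apply_index_eq_sum (hKs : ∀ ω, K ω ∈ s) (ω : Ω) :
    X (K ω) ω = ∑ n ∈ s, {ω | K ω = n}.indicator (1 : Ω → ℝ) ω * X n ω := by
  simp [Set.indicator_apply, hKs]

theorem IndepFun.indicator_index {n : ℕ} (hind : IndepFun K (X n) P) :
    IndepFun ({ω | K ω = n}.indicator (1 : Ω → ℝ)) (X n) P :=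
  hind.comp (φ := ({n} : Set ℕ).indicator 1) measurable_from_nat measurable_id

variable [IsFiniteMeasure P]

theorem IndepFun.integrable_indicator_index_mul (hK : Measurable K) {n : ℕ}
    (hind : IndepFun K (X n) P) (hX : Integrable (X n) P) :
    Integrable (fun ω => {ω | K ω = n}.indicator (1 : Ω → ℝ) ω * X n ω) P :=
  hind.indicator_index.integrable_mul
    ((integrable_const 1).indicator (hK (measurableSet_singleton n))) hX

theorem integrable_apply_index (hK : Measurable K) (hKs : ∀ ω, K ω ∈ s)
    (hX : ∀ n ∈ s, Integrable (X n) P) (hind : ∀ n ∈ s, IndepFun K (X n) P) :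
    Integrable (fun ω => X (K ω) ω) P := by
  simp_rw [apply_index_eq_sum hKs]
  exact integrable_finsetSum _ fun n hn => (hind n hn).integrable_indicator_index_mul hK (hX n hn)

theorem integral_apply_index (hK : Measurable K) (hKs : ∀ ω, K ω ∈ s)
    (hX : ∀ n ∈ s, Integrable (X n) P) (hind : ∀ n ∈ s, IndepFun K (X n) P) :
    ∫ ω, X (K ω) ω ∂P = ∑ n ∈ s, P.real {ω | K ω = n} * ∫ ω, X n ω ∂P := by
  simp_rw [apply_index_eq_sum hKs]
  rw [integral_finsetSum _ fun n hn => (hind n hn).integrable_indicator_index_mul hK (hX n hn)]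
  refine Finset.sum_congr rfl fun n hn => ?_
  have hKn : MeasurableSet {ω | K ω = n} := hK (measurableSet_singleton n)
  rw [← integral_indicator_one hKn,
    ← (hind n hn).indicator_index.integral_mul_eq_mul_integral (by fun_prop) (hX n hn).1]
  rfl

end RandomIndex

end ProbabilityTheory

section MixedSum

open Finset

variable {Ω : Type*} {ξ η : ℕ → Ω → ℝ} {K : Ω → ℕ} {m : ℕ}

def mixedSum (ξ η : ℕ → Ω → ℝ) (m n : ℕ) (ω : Ω) : ℝ :=
  ∑ j ∈ range n, ξ j ω + ∑ j ∈ Ico n m, η j ω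

theorem measurable_biSup_mixFam_inl {S : Set (Option (ℕ ⊕ ℕ))} {j : ℕ} (h : some (.inl j) ∈ S) :
    Measurable[⨆ i ∈ S, MeasurableSpace.comap (mixFam ξ η K i) inferInstance] (ξ j) :=
  measurable_biSup_comap (f := mixFam ξ η K) (i := some (.inl j)) h

theorem measurable_biSup_mixFam_inr {S : Set (Option (ℕ ⊕ ℕ))} {j : ℕ} (h : some (.inr j) ∈ S) :
    Measurable[⨆ i ∈ S, MeasurableSpace.comap (mixFam ξ η K i) inferInstance] (η j) :=
  measurable_biSup_comap (f := mixFam ξ η K) (i := some (.inr j)) h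

theorem measurable_biSup_mixFam_none {S : Set (Option (ℕ ⊕ ℕ))} (h : none ∈ S) :
    Measurable[⨆ i ∈ S, MeasurableSpace.comap (mixFam ξ η K i) inferInstance] K :=
  measurable_biSup_comap (f := mixFam ξ η K) (i := none) h

theorem measurable_sum_add_sum_biSup {S : Set (Option (ℕ ⊕ ℕ))} {s t : Finset ℕ}
    (hs : ∀ j ∈ s, some (.inl j) ∈ S) (ht : ∀ j ∈ t, some (.inr j) ∈ S) :
    Measurable[⨆ i ∈ S, MeasurableSpace.comap (mixFam ξ η K i) inferInstance]
      fun ω => ∑ j ∈ s, ξ j ω + ∑ j ∈ t, η j ω :=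
  (Finset.measurable_sum _ fun j hj => measurable_biSup_mixFam_inl (hs j hj)).add
    (Finset.measurable_sum _ fun j hj => measurable_biSup_mixFam_inr (ht j hj))

variable [MeasurableSpace Ω] {P : Measure Ω}

theorem integrable_of_map_eq {f : Ω → ℝ} {μ : Measure ℝ} (hf : Measurable f) (hfμ : P.map f = μ)
    (hμ : Integrable id μ) : Integrable f P :=
  (integrable_map_measure aestronglyMeasurable_id hf.aemeasurable).1 (hfμ ▸ hμ)

theorem measurable_mixFam (hξm : ∀ j, Measurable (ξ j)) (hηm : ∀ j, Measurable (η j))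
    (hKm : Measurable K) : ∀ i, Measurable (mixFam ξ η K i)
  | none => hKm
  | some (.inl j) => hξm j
  | some (.inr j) => hηm j

theorem integrable_mixedSum (hξ : ∀ j, Integrable (ξ j) P) (hη : ∀ j, Integrable (η j) P)
    (n : ℕ) : Integrable (mixedSum ξ η m n) P :=
  (integrable_finsetSum _ fun j _ => hξ j).add (integrable_finsetSum _ fun j _ => hη j)

theorem indepFun_index_mixedSum (hξm : ∀ j, Measurable (ξ j)) (hηm : ∀ j, Measurable (η j))
    (hKm : Measurable K) (hindep : iIndepFun (mixFam ξ η K) P) (n : ℕ) :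
    IndepFun K (mixedSum ξ η m n) P :=
  hindep.indepFun_of_measurable_biSup (measurable_mixFam hξm hηm hKm) (S := {none})
    (T := range some) (by simp) (measurable_biSup_mixFam_none rfl)
    (measurable_sum_add_sum_biSup (by simp) (by simp))

theorem integral_comp_add_add_eq_integral_conv [IsFiniteMeasure P] {C U V : Ω → ℝ}
    (hC : Measurable C) (hU : Measurable U) (hV : Measurable V) (hCUV : IndepFun C (U + V) P)
    (hUV : IndepFun U V P) {Ψ : ℝ → ℝ} (hΨ : Measurable Ψ) :
    ∫ ω, Ψ (C ω + (U ω + V ω)) ∂P = ∫ x, Ψ x ∂(P.map C ∗ P.map U ∗ P.map V) := by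
  rw [← hUV.map_add_eq_map_conv_map hU hV, ← hCUV.map_add_eq_map_conv_map hC (hU.add hV),
    integral_map (by fun_prop) hΨ.aestronglyMeasurable]
  rfl

theorem indepFun_sum_sum_add (hξm : ∀ j, Measurable (ξ j)) (hηm : ∀ j, Measurable (η j))
    (hKm : Measurable K) (hindep : iIndepFun (mixFam ξ η K) P) {n : ℕ} {U V : Ω → ℝ}
    (hU : U = ξ n ∨ U = η n) (hV : V = ξ (n + 1) ∨ V = η (n + 1)) :
    IndepFun (fun ω => ∑ j ∈ range n, ξ j ω + ∑ j ∈ Ico (n + 2) m, η j ω) (U + V) P := by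
  set T : Set (Option (ℕ ⊕ ℕ)) :=
    {some (.inl n), some (.inl (n + 1)), some (.inr n), some (.inr (n + 1))}
  have hUT : Measurable[⨆ i ∈ T, MeasurableSpace.comap (mixFam ξ η K i) inferInstance] U := by
    rcases hU with rfl | rfl
    exacts [measurable_biSup_mixFam_inl (by simp [T]), measurable_biSup_mixFam_inr (by simp [T])]
  have hVT : Measurable[⨆ i ∈ T, MeasurableSpace.comap (mixFam ξ η K i) inferInstance] V := by
    rcases hV with rfl | rfl
    exacts [measurable_biSup_mixFam_inl (by simp [T]), measurable_biSup_mixFam_inr (by simp [T])]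
  refine hindep.indepFun_of_measurable_biSup (measurable_mixFam hξm hηm hKm) disjoint_compl_left
    (measurable_sum_add_sum_biSup ?_ ?_) (hUT.add hVT)
  all_goals intro j hj; simp at hj; simp [T]; omega

theorem two_mul_integral_comp_mixedSum_le [IsProbabilityMeasure P] {μ ν : Measure ℝ}
    [IsProbabilityMeasure μ] [IsProbabilityMeasure ν] (hμν : ∀ t, μ (Ioi t) ≤ ν (Ioi t))
    (hμ : Integrable id μ) (hν : Integrable id ν) (hξm : ∀ j, Measurable (ξ j))
    (hηm : ∀ j, Measurable (η j)) (hξμ : ∀ j, P.map (ξ j) = μ) (hην : ∀ j, P.map (η j) = ν)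
    (hKm : Measurable K) (hindep : iIndepFun (mixFam ξ η K) P) {Ψ : ℝ → ℝ}
    (hΨ : ConvexOn ℝ univ Ψ) {L : ℝ≥0} (hL : LipschitzWith L Ψ) {n : ℕ} (hn : n + 2 ≤ m) :
    2 * ∫ ω, Ψ (mixedSum ξ η m (n + 1) ω) ∂P ≤
      ∫ ω, Ψ (mixedSum ξ η m n ω) ∂P + ∫ ω, Ψ (mixedSum ξ η m (n + 2) ω) ∂P := by
  set C : Ω → ℝ := fun ω => ∑ j ∈ range n, ξ j ω + ∑ j ∈ Ico (n + 2) m, η j ω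
  have hsplit₀ (ω : Ω) : mixedSum ξ η m n ω = C ω + (η n ω + η (n + 1) ω) := by
    simp only [mixedSum, C, sum_eq_sum_Ico_succ_bot (by omega : n < m),
      sum_eq_sum_Ico_succ_bot (by omega : n + 1 < m)]
    ring
  have hsplit₁ (ω : Ω) : mixedSum ξ η m (n + 1) ω = C ω + (ξ n ω + η (n + 1) ω) := by
    simp only [mixedSum, C, sum_range_succ, sum_eq_sum_Ico_succ_bot (by omega : n + 1 < m)]
    ring
  have hsplit₂ (ω : Ω) : mixedSum ξ η m (n + 2) ω = C ω + (ξ n ω + ξ (n + 1) ω) := by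
    simp only [mixedSum, C, sum_range_succ]
    ring
  have hCm : Measurable C :=
    (Finset.measurable_sum _ fun j _ => hξm j).add (Finset.measurable_sum _ fun j _ => hηm j)
  have hlaw {U V : Ω → ℝ} (hU : U = ξ n ∨ U = η n) (hV : V = ξ (n + 1) ∨ V = η (n + 1))
      (hUm : Measurable U) (hVm : Measurable V) (hUV : IndepFun U V P) :=
    integral_comp_add_add_eq_integral_conv hCm hUm hVm
      (indepFun_sum_sum_add hξm hηm hKm hindep hU hV) hUV hL.continuous.measurable
  simp_rw [hsplit₀, hsplit₁, hsplit₂]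
  rw [hlaw (.inr rfl) (.inr rfl) (hηm n) (hηm (n + 1))
      (hindep.indepFun (i := some (.inr n)) (j := some (.inr (n + 1))) (by simp)),
    hlaw (.inl rfl) (.inr rfl) (hξm n) (hηm (n + 1))
      (hindep.indepFun (i := some (.inl n)) (j := some (.inr (n + 1))) (by simp)),
    hlaw (.inl rfl) (.inl rfl) (hξm n) (hξm (n + 1))
      (hindep.indepFun (i := some (.inl n)) (j := some (.inl (n + 1))) (by simp)),
    hξμ, hξμ, hην, hην]
  have hCi : Integrable C P :=
    (integrable_finsetSum _ fun j _ => integrable_of_map_eq (hξm j) (hξμ j) hμ).add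
      (integrable_finsetSum _ fun j _ => integrable_of_map_eq (hηm j) (hην j) hν)
  have := Measure.isProbabilityMeasure_map (μ := P) hCm.aemeasurable
  exact (two_mul_integral_conv_le hμν
    ((integrable_map_measure aestronglyMeasurable_id hCm.aemeasurable).2 hCi) hμ hν hΨ hL).trans_eq
    (add_comm _ _)

theorem integrable_mixedSum_index [IsFiniteMeasure P] (hξm : ∀ j, Measurable (ξ j))
    (hηm : ∀ j, Measurable (η j)) (hξ : ∀ j, Integrable (ξ j) P) (hη : ∀ j, Integrable (η j) P)
    (hKm : Measurable K) (hKle : ∀ ω, K ω ≤ m) (hindep : iIndepFun (mixFam ξ η K) P) :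
    Integrable (fun ω => mixedSum ξ η m (K ω) ω) P :=
  integrable_apply_index hKm (s := range (m + 1)) (fun ω => mem_range_succ_iff.2 (hKle ω))
    (fun n _ => integrable_mixedSum hξ hη n)
    (fun n _ => indepFun_index_mixedSum hξm hηm hKm hindep n)

theorem integral_comp_mixedSum_le_of_lipschitzWith [IsProbabilityMeasure P] {μ ν : Measure ℝ}
    [IsProbabilityMeasure μ] [IsProbabilityMeasure ν] (hμν : ∀ t, μ (Ioi t) ≤ ν (Ioi t))
    (hμ : Integrable id μ) (hν : Integrable id ν) (hξm : ∀ j, Measurable (ξ j))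
    (hηm : ∀ j, Measurable (η j)) (hξμ : ∀ j, P.map (ξ j) = μ) (hην : ∀ j, P.map (η j) = ν)
    (hKm : Measurable K) (hKle : ∀ ω, K ω ≤ m) (hindep : iIndepFun (mixFam ξ η K) P) {k : ℕ}
    (hEK : ∫ ω, (K ω : ℝ) ∂P = k) {Ψ : ℝ → ℝ} (hΨ : ConvexOn ℝ univ Ψ) {L : ℝ≥0}
    (hL : LipschitzWith L Ψ) :
    ∫ ω, Ψ (mixedSum ξ η m k ω) ∂P ≤ ∫ ω, Ψ (mixedSum ξ η m (K ω) ω) ∂P := by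
  have hKs (ω : Ω) : K ω ∈ range (m + 1) := mem_range_succ_iff.2 (hKle ω)
  have hp₁ : ∑ n ∈ range (m + 1), P.real {ω | K ω = n} = 1 := by
    simpa using (integral_apply_index (P := P) (X := fun _ _ => (1 : ℝ)) hKm hKs
      (fun _ _ => integrable_const _) fun _ _ => indepFun_const_right K 1).symm
  have hpk : ∑ n ∈ range (m + 1), (n : ℝ) * P.real {ω | K ω = n} = k := by
    rw [← hEK, integral_apply_index (P := P) (X := fun n _ => (n : ℝ)) hKm hKs
      (fun _ _ => integrable_const _) fun n _ => indepFun_const_right K (n : ℝ)]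
    simp [mul_comm]
  have hk : k ≤ m := by
    have : (k : ℝ) ≤ m := by
      calc (k : ℝ) = ∑ n ∈ range (m + 1), (n : ℝ) * P.real {ω | K ω = n} := hpk.symm
        _ ≤ ∑ n ∈ range (m + 1), (m : ℝ) * P.real {ω | K ω = n} :=
          sum_le_sum fun n hn => mul_le_mul_of_nonneg_right
            (by exact_mod_cast mem_range_succ_iff.1 hn) measureReal_nonneg
        _ = m := by rw [← mul_sum, hp₁, mul_one]
    exact_mod_cast this
  have hS (n : ℕ) : Integrable (mixedSum ξ η m n) P := integrable_mixedSum
    (fun j => integrable_of_map_eq (hξm j) (hξμ j) hμ)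
    (fun j => integrable_of_map_eq (hηm j) (hην j) hν) n
  rw [integral_apply_index (X := fun n ω => Ψ (mixedSum ξ η m n ω)) hKm hKs
    (fun n _ => hL.integrable_comp (hS n)) fun n _ =>
      (indepFun_index_mixedSum hξm hηm hKm hindep n).comp measurable_id hL.continuous.measurable]
  exact le_sum_mul_of_midconvex (f := fun n => ∫ ω, Ψ (mixedSum ξ η m n ω) ∂P) hk
    (fun n hn => two_mul_integral_comp_mixedSum_le hμν hμ hν hξm hηm hξμ hην hKm hindep hΨ hL hn)
    (fun _ => measureReal_nonneg) hp₁ hpk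

end MixedSum

/-- Lemma 4.5: if `ξ ≤_st η`, the `ξ_j, η_j` are independent copies of
`ξ, η`, and `K` is independent of them, `0 ≤ K ≤ m`, with integer mean `E[K] = k`, then
`Σ_{j=1}^{k} ξ_j + Σ_{j=k+1}^{m} η_j ≤_cx Σ_{j=1}^{K} ξ_j + Σ_{j=K+1}^{m} η_j`. -/
theorem random_sum_convex_order
    {Ω : Type*} [MeasurableSpace Ω] (P : Measure Ω) [IsProbabilityMeasure P]
    (m k : ℕ) (ξ0 η0 : Ω → ℝ) (hξ0m : Measurable ξ0) (hη0m : Measurable η0)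
    (hξ0i : Integrable ξ0 P) (hη0i : Integrable η0 P)
    (hst : ∀ t : ℝ, P {ω | t < ξ0 ω} ≤ P {ω | t < η0 ω})
    (ξ η : ℕ → Ω → ℝ) (hξm : ∀ j, Measurable (ξ j)) (hηm : ∀ j, Measurable (η j))
    (hξcopy : ∀ j, Measure.map (ξ j) P = Measure.map ξ0 P)
    (hηcopy : ∀ j, Measure.map (η j) P = Measure.map η0 P)
    (K : Ω → ℕ) (hKm : Measurable K) (hKle : ∀ ω, K ω ≤ m)
    (hindep : iIndepFun (mixFam ξ η K) P)
    (hEK : ∫ ω, (K ω : ℝ) ∂P = (k : ℝ)) :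
    ∀ φ : ℝ → ℝ, ConvexOn ℝ Set.univ φ →
      Integrable (fun ω => φ (∑ j ∈ Finset.range k, ξ j ω + ∑ j ∈ Finset.Ico k m, η j ω)) P →
      Integrable (fun ω => φ (∑ j ∈ Finset.range (K ω), ξ j ω + ∑ j ∈ Finset.Ico (K ω) m, η j ω)) P →
      ∫ ω, φ (∑ j ∈ Finset.range k, ξ j ω + ∑ j ∈ Finset.Ico k m, η j ω) ∂P ≤
        ∫ ω, φ (∑ j ∈ Finset.range (K ω), ξ j ω + ∑ j ∈ Finset.Ico (K ω) m, η j ω) ∂P := by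
  intro φ hφ hφk hφK
  have := Measure.isProbabilityMeasure_map (μ := P) hξ0m.aemeasurable
  have := Measure.isProbabilityMeasure_map (μ := P) hη0m.aemeasurable
  have hμ : Integrable id (P.map ξ0) :=
    (integrable_map_measure aestronglyMeasurable_id hξ0m.aemeasurable).2 hξ0i
  have hν : Integrable id (P.map η0) :=
    (integrable_map_measure aestronglyMeasurable_id hη0m.aemeasurable).2 hη0i
  have hμν (t : ℝ) : P.map ξ0 (Ioi t) ≤ P.map η0 (Ioi t) := by
    rw [Measure.map_apply hξ0m measurableSet_Ioi, Measure.map_apply hη0m measurableSet_Ioi]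
    exact hst t
  have hξ (j : ℕ) := integrable_of_map_eq (hξm j) (hξcopy j) hμ
  have hη (j : ℕ) := integrable_of_map_eq (hηm j) (hηcopy j) hν
  obtain ⟨Ψ, L, hΨ, hΨφ⟩ := hφ.exists_lipschitzWith_tendsto
  have tendsto {Y : Ω → ℝ} (hY : Integrable Y P) (hφY : Integrable (fun ω => φ (Y ω)) P) :
      Tendsto (fun N => ∫ ω, Ψ N (Y ω) ∂P) atTop (𝓝 (∫ ω, φ (Y ω) ∂P)) :=
    integral_tendsto_of_tendsto_of_monotone (fun N => (hΨ N).2.integrable_comp hY) hφY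
      (ae_of_all _ fun ω => (hΨφ (Y ω)).1) (ae_of_all _ fun ω => (hΨφ (Y ω)).2)
  exact le_of_tendsto_of_tendsto' (tendsto (integrable_mixedSum hξ hη k) hφk)
    (tendsto (integrable_mixedSum_index hξm hηm hξ hη hKm hKle hindep) hφK) fun N =>
      integral_comp_mixedSum_le_of_lipschitzWith hμν hμ hν hξm hηm hξcopy hηcopy hKm hKle hindep
        hEK (hΨ N).1 (hΨ N).2
end

section
/- Let (ξ_1, η_1), …, (ξ_m, η_m) be i.i.d. pairs of integrable random variables with P(ξ_i ≤ η_i) = 1, and let φ : ℝ → ℝ be a non-decreasing convex function such that all expectations below exist. Then the function g : {0, 1, …, m} → ℝ defined by g(k) = E[φ( Σ_{j=1}^{k} ξ_j + Σ_{j=k+1}^{m} η_j )] is convex, i.e. g(k+1) − g(k) is non-decreasing in k for 0 ≤ k ≤ m−1. -/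
/-!
Fix `k` and let `U` collect the terms of the sum with index other than `k, k + 1`. Then `g k`,
`g (k + 1)`, `g (k + 2)` are the expectations of `φ (U + η_k + η_{k+1})`, `φ (U + ξ_k + η_{k+1})`
and `φ (U + ξ_k + ξ_{k+1})`. As `U` is independent of the two i.i.d. pairs `(ξ_k, η_k)` and
`(ξ_{k+1}, η_{k+1})`, exchanging the pairs does not change the law, so `g (k + 1)` is also the
expectation of `φ (U + ξ_{k+1} + η_k)`. The inequality then comes from integrating the increment
inequality `φ (a + y) - φ (a + x) ≤ φ (b + y) - φ (b + x)` (for `a ≤ b`, `x ≤ y`) of a convex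
function, with `a, b = U + ξ_{k+1}, U + η_{k+1}` and `x, y = ξ_k, η_k`.
-/

open MeasureTheory ProbabilityTheory Finset

theorem ConvexOn.map_add_sub_map_add_le {s : Set ℝ} {f : ℝ → ℝ} (hf : ConvexOn ℝ s f)
    {a b x y : ℝ} (hab : a ≤ b) (hxy : x ≤ y) (hax : a + x ∈ s) (hby : b + y ∈ s) :
    f (a + y) - f (a + x) ≤ f (b + y) - f (b + x) := by
  rcases (add_le_add hab hxy).eq_or_lt with hd | hd
  · obtain rfl : a = b := by linarith
    obtain rfl : x = y := by linarith
    rfl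
  -- `b + x` and `a + y` are the convex combinations of `a + x` and `b + y` with weights
  -- `(1 - t, t)` and `(t, 1 - t)`, where `t = (b - a) / d`.
  set d := b + y - (a + x)
  have hd : 0 < d := sub_pos.2 hd
  set t := (b - a) / d
  have ht : t * d = b - a := div_mul_cancel₀ _ hd.ne'
  have ht0 : 0 ≤ t := div_nonneg (sub_nonneg.2 hab) hd.le
  have ht1 : 0 ≤ 1 - t := by
    rw [sub_nonneg, div_le_one hd]; linarith
  have h₁ := hf.2 hax hby ht1 ht0 (by ring)
  have h₂ := hf.2 hax hby ht0 ht1 (by ring)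
  simp only [smul_eq_mul] at h₁ h₂
  rw [show (1 - t) * (a + x) + t * (b + y) = b + x by linear_combination ht] at h₁
  rw [show t * (a + x) + (1 - t) * (b + y) = a + y by linear_combination -ht] at h₂
  linarith

namespace ProbabilityTheory

variable {Ω : Type*} [MeasurableSpace Ω] {P : Measure Ω}

theorem iIndepFun.indepFun_finset_sum_prodMk {ι β M : Type*} [MeasurableSpace β]
    [AddCommMonoid M] [MeasurableSpace M] [MeasurableAdd₂ M]
    {X : ι → Ω → β} (hX : iIndepFun X P) (hXm : ∀ i, Measurable (X i))
    {c : ι → β → M} (hc : ∀ i, Measurable (c i)) {S : Finset ι} {i j : ι}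
    (hi : i ∉ S) (hj : j ∉ S) :
    IndepFun (fun ω => ∑ l ∈ S, c l (X l ω)) (fun ω => (X i ω, X j ω)) P := by
  classical
  have hST : Disjoint S {i, j} := disjoint_insert_right.2 ⟨hi, disjoint_singleton_right.2 hj⟩
  have := (hX.indepFun_finset S {i, j} hST hXm).comp
    (φ := fun x : S → β => ∑ l : S, c l (x l))
    (ψ := fun x : ({i, j} : Finset ι) → β => (x ⟨i, by simp⟩, x ⟨j, by simp⟩))
    (measurable_sum _ fun l _ => (hc l).comp (measurable_pi_apply l))
    (by fun_prop)
  simp only [Function.comp_def] at this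
  convert this using 2 with ω
  exact (sum_coe_sort S fun l => c l (X l ω)).symm

theorem iIndepFun.indepFun_sum_range_add_sum_Ico {ξ η : ℕ → Ω → ℝ}
    (hindep : iIndepFun (fun j ω => (ξ j ω, η j ω)) P)
    (hξ : ∀ j, Measurable (ξ j)) (hη : ∀ j, Measurable (η j)) {k m : ℕ} :
    IndepFun (fun ω => ∑ j ∈ range k, ξ j ω + ∑ j ∈ Ico (k + 2) m, η j ω)
      (fun ω => ((ξ k ω, η k ω), (ξ (k + 1) ω, η (k + 1) ω))) P := by
  have := hindep.indepFun_finset_sum_prodMk (fun j => (hξ j).prodMk (hη j))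
    (S := range k ∪ Ico (k + 2) m) (i := k) (j := k + 1)
    (M := ℝ) (c := fun l => if l < k then Prod.fst else Prod.snd)
    (fun l => by split_ifs <;> fun_prop) (by simp) (by simp)
  convert this using 2 with ω
  rw [sum_union (disjoint_left.2 fun l hl hl' => by simp at hl hl'; omega)]
  congr 1 <;> refine sum_congr rfl fun l hl => ?_ <;> simp only [mem_range, mem_Ico] at hl
  · simp [hl]
  · simp [show ¬l < k by omega]

theorem IndepFun.identDistrib_prodMk_swap {α β : Type*} [MeasurableSpace α] [MeasurableSpace β]
    [IsFiniteMeasure P] {U : Ω → α} {V W : Ω → β} (hU : AEMeasurable U P)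
    (hUVW : IndepFun U (fun ω => (V ω, W ω)) P) (hVW : IndepFun V W P)
    (hlaw : IdentDistrib V W P P) :
    IdentDistrib (fun ω => (U ω, V ω, W ω)) (fun ω => (U ω, W ω, V ω)) P P := by
  have hV := hlaw.aemeasurable_fst
  have hW := hlaw.aemeasurable_snd
  have hUWV : IndepFun U (fun ω => (W ω, V ω)) P := hUVW.comp measurable_id measurable_swap
  refine ⟨hU.prodMk (hV.prodMk hW), hU.prodMk (hW.prodMk hV), ?_⟩
  rw [(indepFun_iff_map_prod_eq_prod_map_map hU (hV.prodMk hW)).1 hUVW,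
    (indepFun_iff_map_prod_eq_prod_map_map hU (hW.prodMk hV)).1 hUWV,
    (indepFun_iff_map_prod_eq_prod_map_map hV hW).1 hVW,
    (indepFun_iff_map_prod_eq_prod_map_map hW hV).1 hVW.symm, hlaw.map_eq]

end ProbabilityTheory

theorem ConvexOn.integral_sub_integral_le_of_identDistrib {Ω : Type*} [MeasurableSpace Ω]
    {P : Measure Ω} [IsFiniteMeasure P] {φ : ℝ → ℝ} (hφ : ConvexOn ℝ Set.univ φ)
    {U : Ω → ℝ} {V W : Ω → ℝ × ℝ} (hU : AEMeasurable U P)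
    (hUVW : IndepFun U (fun ω => (V ω, W ω)) P) (hVW : IndepFun V W P)
    (hlaw : IdentDistrib V W P P)
    (hV : ∀ᵐ ω ∂P, (V ω).1 ≤ (V ω).2) (hW : ∀ᵐ ω ∂P, (W ω).1 ≤ (W ω).2)
    (hA : Integrable (fun ω => φ (U ω + (V ω).1 + (W ω).2)) P)
    (hB : Integrable (fun ω => φ (U ω + (V ω).2 + (W ω).2)) P)
    (hC : Integrable (fun ω => φ (U ω + (V ω).1 + (W ω).1)) P) :
    ∫ ω, φ (U ω + (V ω).1 + (W ω).2) ∂P - ∫ ω, φ (U ω + (V ω).2 + (W ω).2) ∂P ≤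
      ∫ ω, φ (U ω + (V ω).1 + (W ω).1) ∂P - ∫ ω, φ (U ω + (V ω).1 + (W ω).2) ∂P := by
  have hφm : Measurable φ := hφ.locallyLipschitz.continuous.measurable
  have hAD : IdentDistrib (fun ω => φ (U ω + (V ω).1 + (W ω).2))
      (fun ω => φ (U ω + (W ω).1 + (V ω).2)) P P :=
    (hUVW.identDistrib_prodMk_swap hU hVW hlaw).comp
      (u := fun p : ℝ × (ℝ × ℝ) × (ℝ × ℝ) => φ (p.1 + p.2.1.1 + p.2.2.2)) (by fun_prop)
  have hD := hAD.integrable_iff.1 hA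
  have hincr : ∀ᵐ ω ∂P, φ (U ω + (W ω).1 + (V ω).2) - φ (U ω + (V ω).1 + (W ω).1) ≤
      φ (U ω + (V ω).2 + (W ω).2) - φ (U ω + (V ω).1 + (W ω).2) := by
    filter_upwards [hV, hW] with ω hVω hWω
    have := hφ.map_add_sub_map_add_le (a := U ω + (W ω).1) (b := U ω + (W ω).2) (by linarith)
      hVω (Set.mem_univ _) (Set.mem_univ _)
    simpa only [add_right_comm (U ω) (V ω).1, add_right_comm (U ω) (V ω).2] using this
  have hmono := integral_mono_ae (hD.sub hC) (hB.sub hA) hincr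
  simp only [Pi.sub_apply] at hmono
  rw [integral_sub hD hC, integral_sub hB hA, ← hAD.integral_eq] at hmono
  linarith

theorem g_convex_in_k_general
    {Ω : Type*} [MeasurableSpace Ω] (P : Measure Ω) [IsProbabilityMeasure P]
    (m : ℕ) (ξ η : ℕ → Ω → ℝ)
    (hξm : ∀ j, Measurable (ξ j)) (hηm : ∀ j, Measurable (η j))
    -- the pairs (ξ_j, η_j) are independent across j and identically distributed
    (hindep : iIndepFun (fun j ω => (ξ j ω, η j ω)) P)
    (hiid : ∀ j, Measure.map (fun ω => (ξ j ω, η j ω)) P =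
      Measure.map (fun ω => (ξ 0 ω, η 0 ω)) P)
    -- P(ξ_j ≤ η_j) = 1
    (hle : ∀ j, ∀ᵐ ω ∂P, ξ j ω ≤ η j ω)
    (φ : ℝ → ℝ) (hφ_cvx : ConvexOn ℝ Set.univ φ)
    -- all the relevant expectations exist
    (hint : ∀ k ≤ m, Integrable
      (fun ω => φ (∑ j ∈ Finset.range k, ξ j ω + ∑ j ∈ Finset.Ico k m, η j ω)) P) :
    ∀ k, k + 2 ≤ m →
      (∫ ω, φ (∑ j ∈ Finset.range (k+1), ξ j ω + ∑ j ∈ Finset.Ico (k+1) m, η j ω) ∂P) -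
        (∫ ω, φ (∑ j ∈ Finset.range k, ξ j ω + ∑ j ∈ Finset.Ico k m, η j ω) ∂P) ≤
      (∫ ω, φ (∑ j ∈ Finset.range (k+2), ξ j ω + ∑ j ∈ Finset.Ico (k+2) m, η j ω) ∂P) -
        (∫ ω, φ (∑ j ∈ Finset.range (k+1), ξ j ω + ∑ j ∈ Finset.Ico (k+1) m, η j ω) ∂P) := by
  intro k hk
  set U : Ω → ℝ := fun ω => ∑ j ∈ range k, ξ j ω + ∑ j ∈ Ico (k + 2) m, η j ω
  have h₀ (ω : Ω) : ∑ j ∈ range k, ξ j ω + ∑ j ∈ Ico k m, η j ω =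
      U ω + η k ω + η (k + 1) ω := by
    rw [sum_eq_sum_Ico_succ_bot (by omega), sum_eq_sum_Ico_succ_bot (by omega)]; ring
  have h₁ (ω : Ω) : ∑ j ∈ range (k + 1), ξ j ω + ∑ j ∈ Ico (k + 1) m, η j ω =
      U ω + ξ k ω + η (k + 1) ω := by
    rw [sum_range_succ, sum_eq_sum_Ico_succ_bot (by omega)]; ring
  have h₂ (ω : Ω) : ∑ j ∈ range (k + 2), ξ j ω + ∑ j ∈ Ico (k + 2) m, η j ω =
      U ω + ξ k ω + ξ (k + 1) ω := by
    rw [sum_range_succ, sum_range_succ]; ring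
  have hU : IndepFun U (fun ω => ((ξ k ω, η k ω), (ξ (k + 1) ω, η (k + 1) ω))) P :=
    hindep.indepFun_sum_range_add_sum_Ico hξm hηm
  have hlaw : IdentDistrib (fun ω => (ξ k ω, η k ω)) (fun ω => (ξ (k + 1) ω, η (k + 1) ω)) P P :=
    ⟨by fun_prop, by fun_prop, (hiid k).trans (hiid (k + 1)).symm⟩
  simp only [h₀, h₁, h₂]
  exact hφ_cvx.integral_sub_integral_le_of_identDistrib (by fun_prop) hU
    (hindep.indepFun (by omega)) hlaw (hle k) (hle (k + 1))
    (by simpa only [h₁] using hint (k + 1) (by omega)) (by simpa only [h₀] using hint k (by omega))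
    (by simpa only [h₂] using hint (k + 2) hk)

/-- key step of Lemma 4.5: for i.i.d. pairs `(ξ_i, η_i)` with
`P(ξ_i ≤ η_i) = 1` and a non-decreasing convex `φ`, the function
`g(k) = E[φ(Σ_{j=1}^{k} ξ_j + Σ_{j=k+1}^{m} η_j)]` is convex in `k`, i.e. its first
differences `g(k+1) − g(k)` are non-decreasing in `k`. -/
theorem g_convex_in_k
    {Ω : Type*} [MeasurableSpace Ω] (P : Measure Ω) [IsProbabilityMeasure P]
    (m : ℕ) (ξ η : ℕ → Ω → ℝ)
    (hξm : ∀ j, Measurable (ξ j)) (hηm : ∀ j, Measurable (η j))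
    (hξi : ∀ j, Integrable (ξ j) P) (hηi : ∀ j, Integrable (η j) P)
    -- the pairs (ξ_j, η_j) are independent across j and identically distributed
    (hindep : iIndepFun (fun j ω => (ξ j ω, η j ω)) P)
    (hiid : ∀ j, Measure.map (fun ω => (ξ j ω, η j ω)) P =
      Measure.map (fun ω => (ξ 0 ω, η 0 ω)) P)
    -- P(ξ_j ≤ η_j) = 1
    (hle : ∀ j, ∀ᵐ ω ∂P, ξ j ω ≤ η j ω)
    (φ : ℝ → ℝ) (hφ_mono : Monotone φ) (hφ_cvx : ConvexOn ℝ Set.univ φ)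
    -- all the relevant expectations exist
    (hint : ∀ k ≤ m, Integrable
      (fun ω => φ (∑ j ∈ Finset.range k, ξ j ω + ∑ j ∈ Finset.Ico k m, η j ω)) P) :
    ∀ k, k + 2 ≤ m →
      (∫ ω, φ (∑ j ∈ Finset.range (k+1), ξ j ω + ∑ j ∈ Finset.Ico (k+1) m, η j ω) ∂P) -
        (∫ ω, φ (∑ j ∈ Finset.range k, ξ j ω + ∑ j ∈ Finset.Ico k m, η j ω) ∂P) ≤
      (∫ ω, φ (∑ j ∈ Finset.range (k+2), ξ j ω + ∑ j ∈ Finset.Ico (k+2) m, η j ω) ∂P) -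
        (∫ ω, φ (∑ j ∈ Finset.range (k+1), ξ j ω + ∑ j ∈ Finset.Ico (k+1) m, η j ω) ∂P) :=
  g_convex_in_k_general P m ξ η hξm hηm hindep hiid hle φ hφ_cvx hint
end
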